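/- arXiv:2508.13100 — 8 statements merged into one kernel-verified Lean document; each statement's English description precedes it below -/
import Mathlib

section
/- Let T be a positive integer and let B be any function assigning to each vector r ∈ [0,1]^T a partition B(r) = (B_1(r),…,B_{k(r)}(r)) of {1,…,T}. Define Cal(r,y) := Σ_{b ∈ B(r)} ( (1/T) Σ_{t ∈ b} (r_t − y_t) )² for y ∈ {0,1}^T. Then Cal is truthful on sequences: for every p, r ∈ [0,1]^T, E_{y~p}[Cal(p,y)] ≤ E_{y~p}[Cal(r,y)]. -/
open MeasureTheory Finset

noncomputable section

/-- Expectation over independent Bernoulli states `y ~ p`: each `y t ∈ {0,1}` is drawn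
independently with mean `p t`. -/
def bernExp {T : ℕ} (p : Fin T → ℝ) (f : (Fin T → ℝ) → ℝ) : ℝ :=
  ∑ y : Fin T → Bool, (∏ t, if y t then p t else 1 - p t) * f (fun t => if y t then 1 else 0)

/-- `P` is a partition of the index set `{1, …, T}`: its members are nonempty, pairwise
disjoint, and cover everything. -/
def IsPartition {T : ℕ} (P : Finset (Finset (Fin T))) : Prop :=
  (∀ b ∈ P, b.Nonempty) ∧
  (∀ b1 ∈ P, ∀ b2 ∈ P, b1 ≠ b2 → Disjoint b1 b2) ∧
  P.biUnion id = Finset.univ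

lemma sum_prod_bool {T : ℕ} (F : Fin T → Bool → ℝ) :
    ∑ y : Fin T → Bool, ∏ t, F t (y t) = ∏ t, (F t false + F t true) := by
  rw [← Fintype.prod_sum fun t b => F t b]
  congr 1
  funext t
  simp [Fintype.sum_bool, add_comm]

lemma bernExp_prodG {T : ℕ} (p : Fin T → ℝ) (G : Fin T → Bool → ℝ) :
    (∑ y : Fin T → Bool,
        (∏ t, if y t then p t else 1 - p t) * ∏ t, G t (y t))
      = ∏ t, ((1 - p t) * G t false + p t * G t true) := by
  have h : ∀ y : Fin T → Bool,
      (∏ t, if y t then p t else 1 - p t) * ∏ t, G t (y t)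
        = ∏ t, (if y t then p t else 1 - p t) * G t (y t) := by
    intro y; rw [← Finset.prod_mul_distrib]
  simp_rw [h]
  rw [sum_prod_bool (fun t b => (if b then p t else 1 - p t) * G t b)]
  simp

lemma bernExp_sum {T : ℕ} (p : Fin T → ℝ) {ι : Type*} (s : Finset ι)
    (f : ι → (Fin T → ℝ) → ℝ) :
    bernExp p (fun y => ∑ i ∈ s, f i y) = ∑ i ∈ s, bernExp p (f i) := by
  unfold bernExp
  simp_rw [Finset.mul_sum]
  rw [Finset.sum_comm]

lemma bernExp_const_mul {T : ℕ} (p : Fin T → ℝ) (c : ℝ) (f : (Fin T → ℝ) → ℝ) :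
    bernExp p (fun y => c * f y) = c * bernExp p f := by
  unfold bernExp
  rw [Finset.mul_sum]
  congr 1; funext y; ring

lemma moment {T : ℕ} (p q : Fin T → ℝ) (s t : Fin T) :
    bernExp p (fun y => (q s - y s) * (q t - y t)) =
      (q s - p s) * (q t - p t) + (if s = t then p s - (p s)^2 else 0) := by
  classical
  by_cases hst : s = t
  · subst hst
    set G : Fin T → Bool → ℝ :=
      fun u b => if u = s then (q s - (if b then 1 else 0)) ^ 2 else 1 with hG
    have h1 : bernExp p (fun y => (q s - y s) * (q s - y s))
        = ∏ u, ((1 - p u) * G u false + p u * G u true) := by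
      rw [← bernExp_prodG p G]
      unfold bernExp
      congr 1; funext y
      congr 1
      rw [Fintype.prod_eq_single s (fun u hu => by simp [hG, hu])]
      simp [hG, sq]
    rw [h1, Fintype.prod_eq_single s (fun u hu => by simp [hG, hu])]
    simp only [hG, if_pos rfl]
    norm_num
    ring
  · have hts : ¬ t = s := fun h => hst h.symm
    set G : Fin T → Bool → ℝ :=
      fun u b => if u = s then q s - (if b then 1 else 0)
        else if u = t then q t - (if b then 1 else 0) else 1 with hG
    have hsub : ({s, t} : Finset (Fin T)) ⊆ Finset.univ := Finset.subset_univ _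
    have h1 : bernExp p (fun y => (q s - y s) * (q t - y t))
        = ∏ u, ((1 - p u) * G u false + p u * G u true) := by
      rw [← bernExp_prodG p G]
      unfold bernExp
      congr 1; funext y
      congr 1
      rw [← Finset.prod_subset hsub (fun u _ hu => by
        simp only [Finset.mem_insert, Finset.mem_singleton, not_or] at hu
        simp [hG, hu.1, hu.2])]
      rw [Finset.prod_pair hst]
      simp [hG, hst, hts]
    rw [h1, ← Finset.prod_subset hsub (fun u _ hu => by
        simp only [Finset.mem_insert, Finset.mem_singleton, not_or] at hu
        simp [hG, hu.1, hu.2])]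
    rw [Finset.prod_pair hst]
    simp only [hG, if_pos rfl, if_neg hst, if_neg hts]
    norm_num
    ring

lemma block_exp {T : ℕ} (p q : Fin T → ℝ) (b : Finset (Fin T)) :
    bernExp p (fun y => (∑ t ∈ b, (q t - y t))^2)
      = (∑ t ∈ b, (q t - p t))^2 + ∑ t ∈ b, (p t - (p t)^2) := by
  have h : ∀ y : Fin T → ℝ, (∑ t ∈ b, (q t - y t))^2
      = ∑ s ∈ b, ∑ t ∈ b, (q s - y s) * (q t - y t) := by
    intro y; rw [sq, Finset.sum_mul_sum]
  simp_rw [h]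
  rw [bernExp_sum]
  simp_rw [bernExp_sum]
  simp_rw [moment p q]
  simp_rw [Finset.sum_add_distrib]
  congr 1
  rw [Finset.sum_congr rfl (fun x hx => Finset.sum_ite_eq b x (fun _ => p x - (p x)^2))]
  exact Finset.sum_congr rfl (fun x hx => if_pos hx)

lemma partition_sum {T : ℕ} {P : Finset (Finset (Fin T))} (hP : IsPartition P)
    (v : Fin T → ℝ) : ∑ b ∈ P, ∑ t ∈ b, v t = ∑ t, v t := by
  classical
  rw [← hP.2.2]
  exact (Finset.sum_biUnion
    (fun b1 h1 b2 h2 hne =>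
      hP.2.1 b1 (Finset.mem_coe.mp h1) b2 (Finset.mem_coe.mp h2) hne)).symm

/-- Any unnormalized binned squared error, with a binning scheme `B` that may depend
arbitrarily on the reported predictions (but not on the states), is truthful on sequences. -/
theorem ubse_truthful (T : ℕ) (hT : 0 < T)
    (B : (Fin T → ℝ) → Finset (Finset (Fin T)))
    (hB : ∀ r, IsPartition (B r))
    (p r : Fin T → ℝ)
    (hp : ∀ t, p t ∈ Set.Icc (0:ℝ) 1) (hr : ∀ t, r t ∈ Set.Icc (0:ℝ) 1) :
    bernExp p (fun y => ∑ b ∈ B p, ((1 / (T:ℝ)) * ∑ t ∈ b, (p t - y t))^2)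
      ≤ bernExp p (fun y => ∑ b ∈ B r, ((1 / (T:ℝ)) * ∑ t ∈ b, (r t - y t))^2) := by
  have key : ∀ (q : Fin T → ℝ),
      bernExp p (fun y => ∑ b ∈ B q, ((1 / (T:ℝ)) * ∑ t ∈ b, (q t - y t))^2)
        = ∑ b ∈ B q, (1 / (T:ℝ))^2 *
            ((∑ t ∈ b, (q t - p t))^2 + ∑ t ∈ b, (p t - (p t)^2)) := by
    intro q
    rw [bernExp_sum]
    refine Finset.sum_congr rfl (fun b hb => ?_)
    have : (fun y : Fin T → ℝ => ((1 / (T:ℝ)) * ∑ t ∈ b, (q t - y t))^2)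
        = fun y => (1 / (T:ℝ))^2 * (∑ t ∈ b, (q t - y t))^2 := by
      funext y; ring
    rw [this, bernExp_const_mul, block_exp]
  rw [key, key]
  have hL : ∑ b ∈ B p, (1 / (T:ℝ))^2 *
      ((∑ t ∈ b, (p t - p t))^2 + ∑ t ∈ b, (p t - (p t)^2))
      = (1 / (T:ℝ))^2 * ∑ t, (p t - (p t)^2) := by
    rw [← Finset.mul_sum, ← partition_sum (hB p) (fun t => p t - (p t)^2)]
    congr 1
    refine Finset.sum_congr rfl (fun b hb => ?_)
    simp
  rw [hL]
  have hR : (1 / (T:ℝ))^2 * ∑ t, (p t - (p t)^2)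
      = ∑ b ∈ B r, (1 / (T:ℝ))^2 * (∑ t ∈ b, (p t - (p t)^2)) := by
    rw [← Finset.mul_sum, partition_sum (hB r) (fun t => p t - (p t)^2)]
  rw [hR]
  refine Finset.sum_le_sum (fun b hb => ?_)
  have h0 : (0:ℝ) ≤ (∑ t ∈ b, (r t - p t))^2 := sq_nonneg _
  nlinarith [sq_nonneg (1 / (T:ℝ))]

end
end

section
/- For every positive integer T and every r, p ∈ [0,1]^T, the averaged two-bin calibration error satisfies the error decomposition E_{y~p}[ATB(r,y)] = ATB(r,p) + (1/T²) Σ_{t=1}^T p_t(1 − p_t). -/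
open MeasureTheory Finset

noncomputable section

/-- Factorization of the Bernoulli expectation of a product over coordinates. -/
lemma bern_prod {T : ℕ} (p : Fin T → ℝ) (g : Fin T → ℝ → ℝ) :
    ∑ y : Fin T → Bool, (∏ t, if y t then p t else 1 - p t) *
      (∏ t, g t (if y t then 1 else 0))
      = ∏ t, (p t * g t 1 + (1 - p t) * g t 0) := by
  symm
  calc ∏ t, (p t * g t 1 + (1 - p t) * g t 0)
      = ∏ t, ∑ b : Bool, (if b then p t else 1 - p t) * g t (if b then 1 else 0) := by
        simp
    _ = ∑ y : Fin T → Bool, ∏ t, (if y t then p t else 1 - p t) * g t (if y t then 1 else 0) :=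
        Fintype.prod_sum _
    _ = ∑ y : Fin T → Bool, (∏ t, if y t then p t else 1 - p t) *
          ∏ t, g t (if y t then 1 else 0) := by
        refine Finset.sum_congr rfl fun y _ => ?_
        rw [← Finset.prod_mul_distrib]

lemma bern_moment {T : ℕ} (p r : Fin T → ℝ) (a b : Fin T) :
    ∑ y : Fin T → Bool, (∏ t, if y t then p t else 1 - p t) *
      ((r a - (if y a then 1 else 0)) * (r b - (if y b then 1 else 0)))
      = (r a - p a) * (r b - p b) + (if a = b then p a * (1 - p a) else 0) := by
  have key : ∀ y : Fin T → Bool,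
      (r a - (if y a then (1:ℝ) else 0)) * (r b - (if y b then 1 else 0))
        = ∏ t, ((if t = a then r a - (if y t then (1:ℝ) else 0) else 1) *
            (if t = b then r b - (if y t then (1:ℝ) else 0) else 1)) := by
    intro y
    rw [Finset.prod_mul_distrib, Finset.prod_ite_eq' , Finset.prod_ite_eq']
    simp
  simp only [key]
  rw [bern_prod p (fun t x => (if t = a then r a - x else 1) * (if t = b then r b - x else 1))]
  rcases eq_or_ne a b with rfl | hab
  · simp only [if_pos rfl]
    have : ∀ t, (p t * ((if t = a then r a - 1 else 1) * (if t = a then r a - 1 else 1)) +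
        (1 - p t) * ((if t = a then r a - 0 else 1) * (if t = a then r a - 0 else 1)))
        = (if t = a then p a * (r a - 1)^2 + (1 - p a) * (r a)^2 else 1) := by
      intro t; by_cases h : t = a <;> simp [h] <;> ring
    rw [Finset.prod_congr rfl (fun t _ => this t), Finset.prod_ite_eq' Finset.univ a
      (fun _ => p a * (r a - 1)^2 + (1 - p a) * (r a)^2)]
    simp; ring
  · rw [if_neg hab]
    have : ∀ t, (p t * ((if t = a then r a - 1 else 1) * (if t = b then r b - 1 else 1)) +
        (1 - p t) * ((if t = a then r a - 0 else 1) * (if t = b then r b - 0 else 1)))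
        = ((if t = a then r a - p a else 1) * (if t = b then r b - p b else 1)) := by
      intro t
      by_cases h1 : t = a
      · by_cases h2 : t = b
        · exact absurd (h1.symm.trans h2) hab
        · subst h1; simp [h2, hab] <;> ring
      · by_cases h2 : t = b
        · subst h2; simp [h1] <;> ring
        · simp [h1, h2]
    rw [Finset.prod_congr rfl (fun t _ => this t), Finset.prod_mul_distrib,
      Finset.prod_ite_eq', Finset.prod_ite_eq']
    simp

lemma bern_sq {T : ℕ} (p r c : Fin T → ℝ) :
    ∑ y : Fin T → Bool, (∏ t, if y t then p t else 1 - p t) *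
      (∑ t, c t * (r t - (if y t then 1 else 0)))^2
      = (∑ t, c t * (r t - p t))^2 + ∑ t, c t^2 * (p t * (1 - p t)) := by
  have expand : ∀ y : Fin T → Bool,
      (∏ t, if y t then p t else 1 - p t) * (∑ t, c t * (r t - (if y t then (1:ℝ) else 0)))^2
      = ∑ a : Fin T, ∑ b : Fin T, c a * c b *
          ((∏ t, if y t then p t else 1 - p t) *
            ((r a - (if y a then 1 else 0)) * (r b - (if y b then 1 else 0)))) := by
    intro y
    rw [sq, Finset.sum_mul_sum]
    rw [Finset.mul_sum]
    refine Finset.sum_congr rfl fun a _ => ?_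
    rw [Finset.mul_sum]
    refine Finset.sum_congr rfl fun b _ => ?_
    ring
  simp only [expand]
  rw [Finset.sum_comm]
  have swap2 : ∀ a : Fin T, ∑ y : Fin T → Bool, ∑ b : Fin T, c a * c b *
      ((∏ t, if y t then p t else 1 - p t) *
        ((r a - (if y a then (1:ℝ) else 0)) * (r b - (if y b then 1 else 0))))
      = ∑ b : Fin T, c a * c b *
          ((r a - p a) * (r b - p b) + (if a = b then p a * (1 - p a) else 0)) := by
    intro a
    rw [Finset.sum_comm]
    refine Finset.sum_congr rfl fun b _ => ?_
    rw [← Finset.mul_sum, bern_moment p r a b]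
  rw [Finset.sum_congr rfl (fun a _ => swap2 a)]
  have split : ∀ a : Fin T, ∑ b : Fin T, c a * c b *
      ((r a - p a) * (r b - p b) + (if a = b then p a * (1 - p a) else 0))
      = (∑ b : Fin T, (c a * (r a - p a)) * (c b * (r b - p b))) + c a^2 * (p a * (1 - p a)) := by
    intro a
    rw [Finset.sum_congr rfl (fun b _ => mul_add (c a * c b) _ _), Finset.sum_add_distrib]
    congr 1
    · exact Finset.sum_congr rfl fun b _ => by ring
    · rw [Finset.sum_congr rfl (fun b _ => by
        rw [mul_ite, mul_zero] : ∀ b ∈ Finset.univ, c a * c b *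
          (if a = b then p a * (1 - p a) else 0) = if a = b then c a * c b * (p a * (1-p a)) else 0)]
      rw [Finset.sum_ite_eq]
      simp [sq]
  rw [Finset.sum_congr rfl (fun a _ => split a), Finset.sum_add_distrib]
  congr 1
  rw [sq, Finset.sum_mul_sum]

lemma bern_pointwise {T : ℕ} (p r : Fin T → ℝ) (q : ℝ) :
    ∑ y : Fin T → Bool, (∏ t, if y t then p t else 1 - p t) *
      ((∑ t, if r t < q then r t - (if y t then (1:ℝ) else 0) else 0)^2 +
       (∑ t, if q ≤ r t then r t - (if y t then (1:ℝ) else 0) else 0)^2)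
      = ((∑ t, if r t < q then r t - p t else 0)^2 +
         (∑ t, if q ≤ r t then r t - p t else 0)^2) + ∑ t, p t * (1 - p t) := by
  have hc : ∀ (t : Fin T) (z : ℝ), (if r t < q then r t - z else 0)
      = (if r t < q then (1:ℝ) else 0) * (r t - z) := by
    intro t z; by_cases h : r t < q <;> simp [h]
  have hd : ∀ (t : Fin T) (z : ℝ), (if q ≤ r t then r t - z else 0)
      = (if q ≤ r t then (1:ℝ) else 0) * (r t - z) := by
    intro t z; by_cases h : q ≤ r t <;> simp [h]
  simp only [hc, hd, mul_add, Finset.sum_add_distrib]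
  rw [bern_sq p r (fun t => if r t < q then 1 else 0),
    bern_sq p r (fun t => if q ≤ r t then 1 else 0)]
  have key : (∑ t, (if r t < q then (1:ℝ) else 0)^2 * (p t * (1 - p t)))
      + ∑ t, (if q ≤ r t then (1:ℝ) else 0)^2 * (p t * (1 - p t)) = ∑ t, p t * (1 - p t) := by
    rw [← Finset.sum_add_distrib]
    refine Finset.sum_congr rfl fun t _ => ?_
    by_cases h : r t < q
    · simp [h, not_le.mpr h]
    · simp [h, not_lt.mp h]
  rw [← key]; ring

lemma atb_integrable {T : ℕ} (r y : Fin T → ℝ) :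
    IntervalIntegrable (fun q => (1 / (T:ℝ)^2) *
      ((∑ t, if r t < q then r t - y t else 0)^2 +
       (∑ t, if q ≤ r t then r t - y t else 0)^2)) MeasureTheory.volume 0 1 := by
  rw [intervalIntegrable_iff]
  have meas : Measurable (fun q : ℝ => (1 / (T:ℝ)^2) *
      ((∑ t, if r t < q then r t - y t else 0)^2 +
       (∑ t, if q ≤ r t then r t - y t else 0)^2)) := by
    apply Measurable.const_mul
    apply Measurable.add
    · apply Measurable.pow _ measurable_const
      apply Finset.measurable_sum
      intro t _
      exact Measurable.ite (measurableSet_Ioi (a := r t)) measurable_const measurable_const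
    · apply Measurable.pow _ measurable_const
      apply Finset.measurable_sum
      intro t _
      exact Measurable.ite (measurableSet_Iic (a := r t)) measurable_const measurable_const
  refine Measure.integrableOn_of_bounded (M := (1 / (T:ℝ)^2) *
      ((∑ t, |r t - y t|)^2 + (∑ t, |r t - y t|)^2)) ?_ meas.aestronglyMeasurable ?_
  · rw [Set.uIoc_of_le (by norm_num : (0:ℝ) ≤ 1)]
    exact measure_Ioc_lt_top.ne
  · refine Filter.Eventually.of_forall fun q => ?_
    have bnd : ∀ (cond : Fin T → Prop) [DecidablePred cond],
        (∑ t, if cond t then r t - y t else 0)^2 ≤ (∑ t, |r t - y t|)^2 := by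
      intro cond _
      rw [← sq_abs]
      refine pow_le_pow_left₀ (abs_nonneg _) ?_ 2
      refine (Finset.abs_sum_le_sum_abs _ _).trans (Finset.sum_le_sum fun t _ => ?_)
      by_cases h : cond t <;> simp [h]
    have h1 := bnd (fun t => r t < q)
    have h2 := bnd (fun t => q ≤ r t)
    have hT2 : (0:ℝ) ≤ 1 / (T:ℝ)^2 := by positivity
    rw [Real.norm_eq_abs, abs_mul, abs_of_nonneg hT2, abs_of_nonneg (by positivity)]
    have := add_le_add h1 h2
    nlinarith [this]

/-- Averaged two-bin calibration error of predictions `r` w.r.t. states (or probabilities) `y`: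
the bin boundary `q` is uniform on `[0,1]`. -/
def atbSeq {T : ℕ} (r y : Fin T → ℝ) : ℝ :=
  ∫ q in (0:ℝ)..1, (1 / (T:ℝ)^2) *
    ((∑ t, if r t < q then (r t - y t) else 0)^2 +
     (∑ t, if q ≤ r t then (r t - y t) else 0)^2)

/-- Error decomposition of the averaged two-bin calibration error. -/
theorem atb_error_decomposition (T : ℕ) (hT : 0 < T) (r p : Fin T → ℝ)
    (hr : ∀ t, r t ∈ Set.Icc (0:ℝ) 1) (hp : ∀ t, p t ∈ Set.Icc (0:ℝ) 1) :
    bernExp p (fun y => atbSeq r y)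
      = atbSeq r p + (1 / (T:ℝ)^2) * ∑ t, p t * (1 - p t) := by
  have point : ∀ q : ℝ, (∑ y : Fin T → Bool, (∏ t, if y t then p t else 1 - p t) *
      ((1 / (T:ℝ)^2) * ((∑ t, if r t < q then r t - (if y t then (1:ℝ) else 0) else 0)^2 +
        (∑ t, if q ≤ r t then r t - (if y t then (1:ℝ) else 0) else 0)^2)))
      = (1 / (T:ℝ)^2) * ((∑ t, if r t < q then r t - p t else 0)^2 +
        (∑ t, if q ≤ r t then r t - p t else 0)^2) + (1 / (T:ℝ)^2) * ∑ t, p t * (1 - p t) := by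
    intro q
    have step : (∑ y : Fin T → Bool, (∏ t, if y t then p t else 1 - p t) *
        ((1 / (T:ℝ)^2) * ((∑ t, if r t < q then r t - (if y t then (1:ℝ) else 0) else 0)^2 +
          (∑ t, if q ≤ r t then r t - (if y t then (1:ℝ) else 0) else 0)^2)))
        = (1 / (T:ℝ)^2) * ∑ y : Fin T → Bool, (∏ t, if y t then p t else 1 - p t) *
            ((∑ t, if r t < q then r t - (if y t then (1:ℝ) else 0) else 0)^2 +
             (∑ t, if q ≤ r t then r t - (if y t then (1:ℝ) else 0) else 0)^2) := by
      rw [Finset.mul_sum]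
      exact Finset.sum_congr rfl fun y _ => by ring
    rw [step, bern_pointwise p r q]
    ring
  have swap : bernExp p (fun y => atbSeq r y)
      = ∫ q in (0:ℝ)..1, ∑ y : Fin T → Bool, (∏ t, if y t then p t else 1 - p t) *
          ((1 / (T:ℝ)^2) * ((∑ t, if r t < q then r t - (if y t then (1:ℝ) else 0) else 0)^2 +
            (∑ t, if q ≤ r t then r t - (if y t then (1:ℝ) else 0) else 0)^2)) := by
    refine Eq.trans (Finset.sum_congr rfl fun y _ => ?_)
      (intervalIntegral.integral_finset_sum (μ := MeasureTheory.volume) (a := (0:ℝ)) (b := 1)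
        (fun y _ => ?_)).symm
    · exact (intervalIntegral.integral_const_mul _ _).symm
    · exact (atb_integrable r _).const_mul _
  rw [swap]
  rw [intervalIntegral.integral_congr (g := fun q =>
      (1 / (T:ℝ)^2) * ((∑ t, if r t < q then r t - p t else 0)^2 +
        (∑ t, if q ≤ r t then r t - p t else 0)^2) + (1 / (T:ℝ)^2) * ∑ t, p t * (1 - p t))
      (fun q _ => point q)]
  rw [intervalIntegral.integral_add (atb_integrable r p) intervalIntegrable_const]
  rw [intervalIntegral.integral_const, atbSeq]
  norm_num

end
end

section
/- The averaged two-bin calibration error is truthful on sequences: for every positive integer T and every p, r ∈ [0,1]^T, E_{y~p}[ATB(p,y)] ≤ E_{y~p}[ATB(r,y)]. -/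
open MeasureTheory Finset

noncomputable section

namespace AtbAux
variable {T : ℕ}

lemma sum_pi_bool (F : Fin T → Bool → ℝ) :
    ∑ y : Fin T → Bool, ∏ t, F t (y t) = ∏ t, (F t true + F t false) := by
  classical
  have h := Finset.prod_univ_sum (fun _ : Fin T => (Finset.univ : Finset Bool)) F
  rw [Fintype.piFinset_univ] at h
  simp only [Fintype.sum_bool] at h
  exact h.symm

/-- weight -/
def w (p : Fin T → ℝ) (y : Fin T → Bool) : ℝ := ∏ t, if y t then p t else 1 - p t

lemma sum_w (p : Fin T → ℝ) : ∑ y : Fin T → Bool, w p y = 1 := by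
  have := sum_pi_bool (fun t b => if b then p t else 1 - p t)
  simp only [w, this]
  simp

lemma bern_single (p : Fin T → ℝ) (i : Fin T) (u : Bool → ℝ) :
    ∑ y : Fin T → Bool, w p y * u (y i)
      = p i * u true + (1 - p i) * u false := by
  classical
  have key : ∀ y : Fin T → Bool, w p y * u (y i)
      = ∏ t, ((if y t then p t else 1 - p t) * (if t = i then u (y t) else 1)) := by
    intro y
    rw [Finset.prod_mul_distrib]
    congr 1
    rw [Finset.prod_ite_eq' Finset.univ i (fun t => u (y t))]
    simp
  calc ∑ y : Fin T → Bool, w p y * u (y i)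
      = ∑ y : Fin T → Bool, ∏ t,
          ((fun t b => (if b then p t else 1 - p t) * (if t = i then u b else 1)) t (y t)) := by
        exact Finset.sum_congr rfl fun y _ => key y
    _ = ∏ t, (((if true then p t else 1 - p t) * (if t = i then u true else 1))
          + ((if false then p t else 1 - p t) * (if t = i then u false else 1))) :=
        sum_pi_bool (fun t b => (if b then p t else 1 - p t) * (if t = i then u b else 1))
    _ = ∏ t : Fin T, (if t = i then p i * u true + (1 - p i) * u false else 1) := by
        refine Finset.prod_congr rfl fun t _ => ?_
        by_cases h : t = i <;> simp [h]
    _ = p i * u true + (1 - p i) * u false := by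
        rw [Finset.prod_ite_eq' Finset.univ i (fun _ => p i * u true + (1 - p i) * u false)]
        simp

lemma bern_pair (p : Fin T → ℝ) {i j : Fin T} (hij : i ≠ j) (u v : Bool → ℝ) :
    ∑ y : Fin T → Bool, w p y * (u (y i) * v (y j))
      = (p i * u true + (1 - p i) * u false) * (p j * v true + (1 - p j) * v false) := by
  classical
  have key : ∀ y : Fin T → Bool, w p y * (u (y i) * v (y j))
      = ∏ t, ((if y t then p t else 1 - p t) *
          ((if t = i then u (y t) else 1) * (if t = j then v (y t) else 1))) := by
    intro y
    rw [Finset.prod_mul_distrib, Finset.prod_mul_distrib]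
    congr 1
    rw [Finset.prod_ite_eq' Finset.univ i (fun t => u (y t)),
        Finset.prod_ite_eq' Finset.univ j (fun t => v (y t))]
    simp
  calc ∑ y : Fin T → Bool, w p y * (u (y i) * v (y j))
      = ∑ y : Fin T → Bool, ∏ t,
          ((fun t b => (if b then p t else 1 - p t) *
            ((if t = i then u b else 1) * (if t = j then v b else 1))) t (y t)) :=
        Finset.sum_congr rfl fun y _ => key y
    _ = ∏ t, (((if true then p t else 1 - p t) *
            ((if t = i then u true else 1) * (if t = j then v true else 1)))
          + ((if false then p t else 1 - p t) *
            ((if t = i then u false else 1) * (if t = j then v false else 1)))) :=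
        sum_pi_bool (fun t b => (if b then p t else 1 - p t) *
            ((if t = i then u b else 1) * (if t = j then v b else 1)))
    _ = ∏ t : Fin T, ((if t = i then p i * u true + (1 - p i) * u false else 1) *
          (if t = j then p j * v true + (1 - p j) * v false else 1)) := by
        refine Finset.prod_congr rfl fun t _ => ?_
        by_cases hi : t = i
        · subst hi
          have hj : ¬ (t = j) := hij
          simp [hj]
        · by_cases hj : t = j
          · subst hj ; simp [hi]
          · simp [hi, hj]
    _ = (p i * u true + (1 - p i) * u false) * (p j * v true + (1 - p j) * v false) := by
        rw [Finset.prod_mul_distrib,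
          Finset.prod_ite_eq' Finset.univ i (fun _ => p i * u true + (1 - p i) * u false),
          Finset.prod_ite_eq' Finset.univ j (fun _ => p j * v true + (1 - p j) * v false)]
        simp


/-- expectation of a squared bin sum -/
lemma bern_sq (p c : Fin T → ℝ) (s : Finset (Fin T)) :
    ∑ y : Fin T → Bool, w p y * (∑ t ∈ s, (c t - (if y t then (1:ℝ) else 0)))^2
      = (∑ t ∈ s, (c t - p t))^2 + ∑ t ∈ s, p t * (1 - p t) := by
  classical
  have expand : ∀ y : Fin T → Bool,
      w p y * (∑ t ∈ s, (c t - (if y t then (1:ℝ) else 0)))^2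
      = ∑ i ∈ s, ∑ j ∈ s, w p y *
          ((c i - (if y i then (1:ℝ) else 0)) * (c j - (if y j then (1:ℝ) else 0))) := by
    intro y
    rw [sq, Finset.sum_mul_sum]
    rw [Finset.mul_sum]
    exact Finset.sum_congr rfl fun i _ => Finset.mul_sum _ _ _
  rw [Finset.sum_congr rfl fun y _ => expand y]
  rw [Finset.sum_comm]
  have swap2 : ∀ i ∈ s, (∑ y : Fin T → Bool, ∑ j ∈ s, w p y *
        ((c i - (if y i then (1:ℝ) else 0)) * (c j - (if y j then (1:ℝ) else 0))))
      = ∑ j ∈ s, ∑ y : Fin T → Bool, w p y *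
        ((c i - (if y i then (1:ℝ) else 0)) * (c j - (if y j then (1:ℝ) else 0))) := by
    intro i _ ; exact Finset.sum_comm
  rw [Finset.sum_congr rfl swap2]
  have inner : ∀ i ∈ s, ∀ j ∈ s, (∑ y : Fin T → Bool, w p y *
        ((c i - (if y i then (1:ℝ) else 0)) * (c j - (if y j then (1:ℝ) else 0))))
      = (c i - p i) * (c j - p j) + (if i = j then p i * (1 - p i) else 0) := by
    intro i _ j _
    by_cases hij : i = j
    · subst hij
      have h := bern_single p i (fun b => (c i - (if b then (1:ℝ) else 0)) *
          (c i - (if b then (1:ℝ) else 0)))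
      simp only [if_true, if_false] at h
      rw [h]
      simp ; ring
    · have h := bern_pair p hij (fun b => c i - (if b then (1:ℝ) else 0))
        (fun b => c j - (if b then (1:ℝ) else 0))
      rw [h]
      simp [hij] ; ring
  rw [Finset.sum_congr rfl fun i hi => Finset.sum_congr rfl fun j hj => inner i hi j hj]
  rw [Finset.sum_congr rfl fun i (_ : i ∈ s) => Finset.sum_add_distrib]
  rw [Finset.sum_add_distrib]
  congr 1
  · rw [sq, Finset.sum_mul_sum]
  · exact Finset.sum_congr rfl fun i hi => by
      rw [Finset.sum_ite_eq s i (fun _ => p i * (1 - p i)), if_pos hi]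


lemma key_pointwise (p r : Fin T → ℝ) (q : ℝ) :
    ∑ y : Fin T → Bool, w p y * ((1/(T:ℝ)^2) *
      ((∑ t, if r t < q then (r t - (if y t then (1:ℝ) else 0)) else 0)^2 +
       (∑ t, if q ≤ r t then (r t - (if y t then (1:ℝ) else 0)) else 0)^2))
    = (1/(T:ℝ)^2) * ((∑ t, if r t < q then (r t - p t) else 0)^2 +
       ((∑ t, if q ≤ r t then (r t - p t) else 0)^2 + ∑ t, p t * (1 - p t))) := by
  classical
  set s1 : Finset (Fin T) := Finset.univ.filter (fun t => r t < q) with hs1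
  set s2 : Finset (Fin T) := Finset.univ.filter (fun t => q ≤ r t) with hs2
  have e1 : ∀ c : Fin T → ℝ, (∑ t, if r t < q then c t else 0) = ∑ t ∈ s1, c t := by
    intro c ; rw [hs1, Finset.sum_filter]
  have e2 : ∀ c : Fin T → ℝ, (∑ t, if q ≤ r t then c t else 0) = ∑ t ∈ s2, c t := by
    intro c ; rw [hs2, Finset.sum_filter]
  have hy : ∀ y : Fin T → Bool, w p y * ((1/(T:ℝ)^2) *
      ((∑ t, if r t < q then (r t - (if y t then (1:ℝ) else 0)) else 0)^2 +
       (∑ t, if q ≤ r t then (r t - (if y t then (1:ℝ) else 0)) else 0)^2))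
      = (1/(T:ℝ)^2) * (w p y * (∑ t ∈ s1, (r t - (if y t then (1:ℝ) else 0)))^2)
        + (1/(T:ℝ)^2) * (w p y * (∑ t ∈ s2, (r t - (if y t then (1:ℝ) else 0)))^2) := by
    intro y
    rw [e1 (fun t => r t - (if y t then (1:ℝ) else 0)),
        e2 (fun t => r t - (if y t then (1:ℝ) else 0))]
    ring
  rw [Finset.sum_congr rfl fun y _ => hy y, Finset.sum_add_distrib,
      ← Finset.mul_sum, ← Finset.mul_sum, bern_sq p r s1, bern_sq p r s2]
  have hvar : (∑ t ∈ s1, p t * (1 - p t)) + ∑ t ∈ s2, p t * (1 - p t)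
      = ∑ t, p t * (1 - p t) := by
    have h2 : s2 = Finset.univ.filter (fun t => ¬ r t < q) := by
      rw [hs2] ; apply Finset.filter_congr ; intro t _ ; simp [not_lt]
    rw [h2]
    exact Finset.sum_filter_add_sum_filter_not Finset.univ (fun t => r t < q) _
  rw [e1 (fun t => r t - p t), e2 (fun t => r t - p t)]
  rw [← hvar]
  ring

lemma meas_lt (r d : Fin T → ℝ) :
    Measurable fun q : ℝ => ∑ t, if r t < q then d t else (0:ℝ) := by
  apply Finset.measurable_sum
  intro t _
  exact Measurable.ite (measurableSet_Ioi (a := r t)) measurable_const measurable_const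

lemma meas_le (r d : Fin T → ℝ) :
    Measurable fun q : ℝ => ∑ t, if q ≤ r t then d t else (0:ℝ) := by
  apply Finset.measurable_sum
  intro t _
  exact Measurable.ite (measurableSet_Iic (a := r t)) measurable_const measurable_const

lemma abs_bin_le_lt (r d : Fin T → ℝ) (q : ℝ) :
    |∑ t, if r t < q then d t else (0:ℝ)| ≤ ∑ t, |d t| := by
  refine (Finset.abs_sum_le_sum_abs _ _).trans (Finset.sum_le_sum fun t _ => ?_)
  by_cases h : r t < q <;> simp [h]

lemma abs_bin_le_le (r d : Fin T → ℝ) (q : ℝ) :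
    |∑ t, if q ≤ r t then d t else (0:ℝ)| ≤ ∑ t, |d t| := by
  refine (Finset.abs_sum_le_sum_abs _ _).trans (Finset.sum_le_sum fun t _ => ?_)
  by_cases h : q ≤ r t <;> simp [h]

lemma II_of_bdd (f : ℝ → ℝ) (hm : Measurable f) (C : ℝ) (hb : ∀ q, |f q| ≤ C) :
    IntervalIntegrable f volume 0 1 := by
  rw [intervalIntegrable_iff_integrableOn_Ioc_of_le zero_le_one]
  refine Measure.integrableOn_of_bounded ?_ hm.aestronglyMeasurable (M := C) (ae_of_all _ ?_)
  · simp [Real.volume_Ioc]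
  · intro q ; rw [Real.norm_eq_abs] ; exact hb q

lemma II_shape (a b : ℝ) (ha : 0 ≤ a) (r d : Fin T → ℝ) :
    IntervalIntegrable (fun q => a * ((∑ t, if r t < q then d t else (0:ℝ))^2 +
      ((∑ t, if q ≤ r t then d t else (0:ℝ))^2 + b))) volume 0 1 := by
  set M : ℝ := ∑ t, |d t| with hM
  have hM0 : 0 ≤ M := Finset.sum_nonneg fun t _ => abs_nonneg _
  refine II_of_bdd _ ?_ (a * (M^2 + (M^2 + |b|))) ?_
  · exact (((meas_lt r d).pow_const 2).add
      (((meas_le r d).pow_const 2).add measurable_const)).const_mul a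
  · intro q
    have h1 := abs_bin_le_lt r d q
    have h2 := abs_bin_le_le r d q
    rw [abs_mul, abs_of_nonneg ha]
    apply mul_le_mul_of_nonneg_left _ ha
    have e1 : (∑ t, if r t < q then d t else (0:ℝ))^2 ≤ M^2 := by
      rw [← sq_abs] ; exact pow_le_pow_left₀ (abs_nonneg _) h1 2
    have e2 : (∑ t, if q ≤ r t then d t else (0:ℝ))^2 ≤ M^2 := by
      rw [← sq_abs] ; exact pow_le_pow_left₀ (abs_nonneg _) h2 2
    calc |(∑ t, if r t < q then d t else (0:ℝ))^2 +
          ((∑ t, if q ≤ r t then d t else (0:ℝ))^2 + b)|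
        ≤ |(∑ t, if r t < q then d t else (0:ℝ))^2| +
          (|(∑ t, if q ≤ r t then d t else (0:ℝ))^2| + |b|) :=
          (abs_add_le _ _).trans (by gcongr ; exact abs_add_le _ _)
      _ ≤ M^2 + (M^2 + |b|) := by
          rw [abs_of_nonneg (sq_nonneg _), abs_of_nonneg (sq_nonneg _)] ; gcongr

end AtbAux

namespace AtbAux

lemma II_shape0 (a : ℝ) (ha : 0 ≤ a) (r d : Fin T → ℝ) :
    IntervalIntegrable (fun q => a * ((∑ t, if r t < q then d t else (0:ℝ))^2 +
      (∑ t, if q ≤ r t then d t else (0:ℝ))^2)) volume 0 1 := by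
  have h := II_shape a 0 ha r d
  simpa using h

lemma bern_atb (p r : Fin T → ℝ) :
    bernExp p (fun y => atbSeq r y)
      = ∫ q in (0:ℝ)..1, (1/(T:ℝ)^2) *
          ((∑ t, if r t < q then (r t - p t) else 0)^2 +
           ((∑ t, if q ≤ r t then (r t - p t) else 0)^2 + ∑ t, p t * (1 - p t))) := by
  classical
  have ha : (0:ℝ) ≤ 1/(T:ℝ)^2 := by positivity
  have step1 : bernExp p (fun y => atbSeq r y)
      = ∑ y : Fin T → Bool, ∫ q in (0:ℝ)..1, w p y * ((1/(T:ℝ)^2) *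
          ((∑ t, if r t < q then (r t - (if y t then (1:ℝ) else 0)) else 0)^2 +
           (∑ t, if q ≤ r t then (r t - (if y t then (1:ℝ) else 0)) else 0)^2)) := by
    unfold bernExp atbSeq
    refine Finset.sum_congr rfl fun y _ => ?_
    exact (intervalIntegral.integral_const_mul (w p y) _).symm
  rw [step1]
  have step2 := intervalIntegral.integral_finset_sum (μ := volume) (a := (0:ℝ)) (b := 1) (s := Finset.univ)
      (f := fun (y : Fin T → Bool) (q : ℝ) => w p y * ((1/(T:ℝ)^2) *
        ((∑ t, if r t < q then (r t - (if y t then (1:ℝ) else 0)) else 0)^2 +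
         (∑ t, if q ≤ r t then (r t - (if y t then (1:ℝ) else 0)) else 0)^2)))
      (fun y _ => IntervalIntegrable.const_mul
        (II_shape0 (1/(T:ℝ)^2) ha r (fun t => r t - (if y t then (1:ℝ) else 0))) (w p y))
  rw [← step2]
  refine intervalIntegral.integral_congr fun q _ => ?_
  exact key_pointwise p r q

end AtbAux

/-- The averaged two-bin calibration error is truthful on sequences. -/
theorem atb_truthful (T : ℕ) (hT : 0 < T) (p r : Fin T → ℝ)
    (hp : ∀ t, p t ∈ Set.Icc (0:ℝ) 1) (hr : ∀ t, r t ∈ Set.Icc (0:ℝ) 1) :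
    bernExp p (fun y => atbSeq p y) ≤ bernExp p (fun y => atbSeq r y) := by
  rw [AtbAux.bern_atb p p, AtbAux.bern_atb p r]
  have ha : (0:ℝ) ≤ 1/(T:ℝ)^2 := by positivity
  apply intervalIntegral.integral_mono_on zero_le_one
  · exact AtbAux.II_shape (1/(T:ℝ)^2) (∑ t, p t * (1 - p t)) ha p (fun t => p t - p t)
  · exact AtbAux.II_shape (1/(T:ℝ)^2) (∑ t, p t * (1 - p t)) ha r (fun t => r t - p t)
  · intro q _
    apply mul_le_mul_of_nonneg_left _ ha
    have h1 : (∑ t, if p t < q then (p t - p t) else (0:ℝ)) = 0 := by simp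
    rw [h1]
    have h2 : (∑ t, if q ≤ p t then (p t - p t) else (0:ℝ)) = 0 := by simp
    rw [h2]
    have := sq_nonneg (∑ t, if r t < q then (r t - p t) else (0:ℝ))
    have := sq_nonneg (∑ t, if q ≤ r t then (r t - p t) else (0:ℝ))
    nlinarith


end
end

section
/- Let Π be a joint probability distribution of (v_1, v_2, y) ∈ [0,1] × [0,1] × {0,1}, let J_1 be the marginal distribution of (v_1, y) and J_2 the marginal distribution of (v_2, y). Then |ℓ1-ATB(J_1) − ℓ1-ATB(J_2)| ≤ 3 · E_Π[|v_1 − v_2|] and |ATB(J_1) − ATB(J_2)| ≤ 6 · E_Π[|v_1 − v_2|]. -/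
/-!
Fix a threshold `q` and couple the two marginals through `P`. If `v₁` and `v₂` lie on the same
side of `q`, the lower- and upper-bin integrands `(vᵢ - y) 1{vᵢ < q}`, `(vᵢ - y) 1{q ≤ vᵢ}`
change by `|v₁ - v₂|` in total; otherwise each changes by at most `1`. So the two bin biases
move by at most `E|v₁ - v₂| + 2 P(q lies between v₁ and v₂)`, and averaging over `q ∈ [0,1]`
(Fubini) turns the probability into `E|v₁ - v₂|`, giving the constant `3`. Finally `ℓ1-ATB` is
`1`-Lipschitz and `ATB` is `2`-Lipschitz in the bin biases, which lie in `[-1, 1]`.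
-/

open MeasureTheory Finset
open scoped ENNReal

noncomputable section

/-- Bias of the lower bin `{v < q}` under a distribution `mu` of prediction-state pairs. -/
def binNeg (mu : Measure (ℝ × ℝ)) (q : ℝ) : ℝ :=
  ∫ x, (x.1 - x.2) * (if x.1 < q then 1 else 0) ∂mu

/-- Bias of the upper bin `{v ≥ q}` under a distribution `mu` of prediction-state pairs. -/
def binPos (mu : Measure (ℝ × ℝ)) (q : ℝ) : ℝ :=
  ∫ x, (x.1 - x.2) * (if q ≤ x.1 then 1 else 0) ∂mu

/-- Averaged two-bin calibration error of a prediction-state distribution. -/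
def ATB (mu : Measure (ℝ × ℝ)) : ℝ :=
  ∫ q in (0:ℝ)..1, ((binNeg mu q)^2 + (binPos mu q)^2)

/-- ℓ1 variant of the averaged two-bin calibration error of a distribution. -/
def l1ATB (mu : Measure (ℝ × ℝ)) : ℝ :=
  ∫ q in (0:ℝ)..1, (|binNeg mu q| + |binPos mu q|)

@[fun_prop]
lemma measurable_ite_lt {α : Type*} [MeasurableSpace α] {f g : α → ℝ} (hf : Measurable f)
    (hg : Measurable g) : Measurable fun x => if f x < g x then (1:ℝ) else 0 :=
  Measurable.ite (measurableSet_lt hf hg) measurable_const measurable_const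

@[fun_prop]
lemma measurable_ite_le {α : Type*} [MeasurableSpace α] {f g : α → ℝ} (hf : Measurable f)
    (hg : Measurable g) : Measurable fun x => if f x ≤ g x then (1:ℝ) else 0 :=
  Measurable.ite (measurableSet_le hf hg) measurable_const measurable_const

lemma abs_mul_ite_le_one {c : ℝ} (hc : |c| ≤ 1) (p : Prop) [Decidable p] :
    |c * (if p then 1 else 0)| ≤ 1 := by
  split_ifs <;> simp [hc]

lemma abs_sq_sub_sq_le_two_mul {a b : ℝ} (ha : |a| ≤ 1) (hb : |b| ≤ 1) :
    |a ^ 2 - b ^ 2| ≤ 2 * |a - b| := by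
  rw [sq_sub_sq, abs_mul]
  exact mul_le_mul_of_nonneg_right ((abs_add_le a b).trans (by linarith)) (abs_nonneg _)

lemma intervalIntegrable_of_abs_le {f : ℝ → ℝ} (hf : Measurable f) {C : ℝ}
    (hC : ∀ q, |f q| ≤ C) (a b : ℝ) : IntervalIntegrable f volume a b :=
  intervalIntegrable_const.mono_fun' hf.aestronglyMeasurable (ae_of_all _ hC)

lemma abs_ite_lt_sub_ite_lt (a b q : ℝ) :
    |(if a < q then (1:ℝ) else 0) - (if b < q then 1 else 0)| =
      (Set.uIoc a b).indicator 1 q := by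
  classical
  rw [Set.indicator_apply, Set.mem_uIoc]
  split_ifs <;> norm_num <;> grind

lemma abs_ite_lt_sub_ite_lt_le_one (a b q : ℝ) :
    |(if a < q then (1:ℝ) else 0) - (if b < q then 1 else 0)| ≤ 1 := by
  split_ifs <;> norm_num

lemma integral_abs_ite_lt_sub_ite_lt {a b : ℝ} (ha : a ∈ Set.Icc (0:ℝ) 1)
    (hb : b ∈ Set.Icc (0:ℝ) 1) :
    ∫ q in (0:ℝ)..1, |(if a < q then (1:ℝ) else 0) - (if b < q then 1 else 0)| = |a - b| := by
  have hsub : Set.uIoc a b ⊆ Set.Ioc 0 1 :=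
    Set.Ioc_subset_Ioc (le_min ha.1 hb.1) (max_le ha.2 hb.2)
  simp_rw [abs_ite_lt_sub_ite_lt, intervalIntegral.integral_of_le zero_le_one,
    integral_indicator_one measurableSet_uIoc, measureReal_restrict_apply measurableSet_uIoc,
    Set.inter_eq_left.mpr hsub, measureReal_def, Real.volume_uIoc, abs_sub_comm]
  exact ENNReal.toReal_ofReal (abs_nonneg _)

def binGapBound (a b q : ℝ) : ℝ :=
  |a - b| + 2 * |(if a < q then (1:ℝ) else 0) - (if b < q then 1 else 0)|

@[fun_prop]
lemma measurable_binGapBound {α : Type*} [MeasurableSpace α] {f g h : α → ℝ}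
    (hf : Measurable f) (hg : Measurable g) (hh : Measurable h) :
    Measurable fun x => binGapBound (f x) (g x) (h x) := by
  unfold binGapBound
  fun_prop

lemma binGapBound_nonneg (a b q : ℝ) : 0 ≤ binGapBound a b q := by
  unfold binGapBound
  positivity

lemma binGapBound_le (a b q : ℝ) : binGapBound a b q ≤ |a - b| + 2 := by
  unfold binGapBound
  linarith [abs_ite_lt_sub_ite_lt_le_one a b q]

lemma integral_binGapBound {a b : ℝ} (ha : a ∈ Set.Icc (0:ℝ) 1) (hb : b ∈ Set.Icc (0:ℝ) 1) :
    ∫ q in (0:ℝ)..1, binGapBound a b q = 3 * |a - b| := by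
  have hind := intervalIntegrable_of_abs_le (by fun_prop)
    (fun q => (abs_abs _).trans_le (abs_ite_lt_sub_ite_lt_le_one a b q)) 0 1
  unfold binGapBound
  rw [intervalIntegral.integral_add intervalIntegrable_const (hind.const_mul 2),
    intervalIntegral.integral_const_mul, integral_abs_ite_lt_sub_ite_lt ha hb,
    intervalIntegral.integral_const]
  ring

lemma abs_sub_binTerms_le {a b y : ℝ} (ha : |a - y| ≤ 1) (hb : |b - y| ≤ 1) (q : ℝ) :
    |(a - y) * (if a < q then 1 else 0) - (b - y) * (if b < q then 1 else 0)|
      + |(a - y) * (if q ≤ a then 1 else 0) - (b - y) * (if q ≤ b then 1 else 0)|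
      ≤ binGapBound a b q := by
  have hab := abs_nonneg (a - b)
  have hb' : |y - b| ≤ 1 := abs_sub_comm b y ▸ hb
  unfold binGapBound
  split_ifs <;> norm_num <;> linarith

section Bins

variable (μ : Measure (ℝ × ℝ))

@[fun_prop]
lemma measurable_binNeg [SFinite μ] : Measurable (binNeg μ) :=
  (Measurable.stronglyMeasurable (by fun_prop :
    Measurable fun p : ℝ × ℝ × ℝ => (p.2.1 - p.2.2) * (if p.2.1 < p.1 then (1:ℝ) else 0)))
    |>.integral_prod_right' |>.measurable

@[fun_prop]
lemma measurable_binPos [SFinite μ] : Measurable (binPos μ) :=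
  (Measurable.stronglyMeasurable (by fun_prop :
    Measurable fun p : ℝ × ℝ × ℝ => (p.2.1 - p.2.2) * (if p.1 ≤ p.2.1 then (1:ℝ) else 0)))
    |>.integral_prod_right' |>.measurable

variable [IsProbabilityMeasure μ] {μ} (hμ : ∀ᵐ x ∂μ, |x.1 - x.2| ≤ 1)
include hμ

lemma abs_binNeg_le_one (q : ℝ) : |binNeg μ q| ≤ 1 := by
  simpa [binNeg] using norm_integral_le_of_norm_le_const
    (hμ.mono fun x hx => (Real.norm_eq_abs _).trans_le (abs_mul_ite_le_one hx (x.1 < q)))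

lemma abs_binPos_le_one (q : ℝ) : |binPos μ q| ≤ 1 := by
  simpa [binPos] using norm_integral_le_of_norm_le_const
    (hμ.mono fun x hx => (Real.norm_eq_abs _).trans_le (abs_mul_ite_le_one hx (q ≤ x.1)))

lemma intervalIntegrable_binNeg (a b : ℝ) : IntervalIntegrable (binNeg μ) volume a b :=
  intervalIntegrable_of_abs_le (measurable_binNeg μ) (abs_binNeg_le_one hμ) a b

lemma intervalIntegrable_binPos (a b : ℝ) : IntervalIntegrable (binPos μ) volume a b :=
  intervalIntegrable_of_abs_le (measurable_binPos μ) (abs_binPos_le_one hμ) a b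

end Bins

def binGap (μ ν : Measure (ℝ × ℝ)) (q : ℝ) : ℝ :=
  |binNeg μ q - binNeg ν q| + |binPos μ q - binPos ν q|

section BinGap

variable {μ ν : Measure (ℝ × ℝ)} [IsProbabilityMeasure μ] [IsProbabilityMeasure ν]
  (hμ : ∀ᵐ x ∂μ, |x.1 - x.2| ≤ 1) (hν : ∀ᵐ x ∂ν, |x.1 - x.2| ≤ 1)
include hμ hν

lemma intervalIntegrable_binGap (a b : ℝ) : IntervalIntegrable (binGap μ ν) volume a b :=
  ((intervalIntegrable_binNeg hμ a b).sub (intervalIntegrable_binNeg hν a b)).abs.add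
    ((intervalIntegrable_binPos hμ a b).sub (intervalIntegrable_binPos hν a b)).abs

lemma abs_l1ATB_sub_le : |l1ATB μ - l1ATB ν| ≤ ∫ q in (0:ℝ)..1, binGap μ ν q := by
  have hl1 : ∀ {ρ : Measure (ℝ × ℝ)} [IsProbabilityMeasure ρ], (∀ᵐ x ∂ρ, |x.1 - x.2| ≤ 1) →
      IntervalIntegrable (fun q => |binNeg ρ q| + |binPos ρ q|) volume 0 1 :=
    fun hρ => (intervalIntegrable_binNeg hρ 0 1).abs.add (intervalIntegrable_binPos hρ 0 1).abs
  rw [l1ATB, l1ATB, ← intervalIntegral.integral_sub (hl1 hμ) (hl1 hν)]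
  refine (intervalIntegral.abs_integral_le_integral_abs zero_le_one).trans <|
    intervalIntegral.integral_mono_on zero_le_one ((hl1 hμ).sub (hl1 hν)).abs
      (intervalIntegrable_binGap hμ hν 0 1) fun q _ => ?_
  have hN := abs_abs_sub_abs_le_abs_sub (binNeg μ q) (binNeg ν q)
  have hP := abs_abs_sub_abs_le_abs_sub (binPos μ q) (binPos ν q)
  calc |(|binNeg μ q| + |binPos μ q|) - (|binNeg ν q| + |binPos ν q|)|
      = |(|binNeg μ q| - |binNeg ν q|) + (|binPos μ q| - |binPos ν q|)| := by congr 1; ring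
    _ ≤ binGap μ ν q := (abs_add_le _ _).trans (add_le_add hN hP)

lemma abs_ATB_sub_le : |ATB μ - ATB ν| ≤ 2 * ∫ q in (0:ℝ)..1, binGap μ ν q := by
  have hsq : ∀ {ρ : Measure (ℝ × ℝ)} [IsProbabilityMeasure ρ], (∀ᵐ x ∂ρ, |x.1 - x.2| ≤ 1) →
      IntervalIntegrable (fun q => binNeg ρ q ^ 2 + binPos ρ q ^ 2) volume 0 1 := by
    intro ρ _ hρ
    refine intervalIntegrable_of_abs_le (by fun_prop) (C := 2) (fun q => ?_) 0 1
    have hN := (sq_le_one_iff_abs_le_one _).mpr (abs_binNeg_le_one hρ q)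
    have hP := (sq_le_one_iff_abs_le_one _).mpr (abs_binPos_le_one hρ q)
    rw [abs_of_nonneg (by positivity)]
    linarith
  rw [ATB, ATB, ← intervalIntegral.integral_sub (hsq hμ) (hsq hν),
    ← intervalIntegral.integral_const_mul]
  refine (intervalIntegral.abs_integral_le_integral_abs zero_le_one).trans <|
    intervalIntegral.integral_mono_on zero_le_one ((hsq hμ).sub (hsq hν)).abs
      ((intervalIntegrable_binGap hμ hν 0 1).const_mul 2) fun q _ => ?_
  have hN := abs_sq_sub_sq_le_two_mul (abs_binNeg_le_one hμ q) (abs_binNeg_le_one hν q)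
  have hP := abs_sq_sub_sq_le_two_mul (abs_binPos_le_one hμ q) (abs_binPos_le_one hν q)
  calc |(binNeg μ q ^ 2 + binPos μ q ^ 2) - (binNeg ν q ^ 2 + binPos ν q ^ 2)|
      = |(binNeg μ q ^ 2 - binNeg ν q ^ 2) + (binPos μ q ^ 2 - binPos ν q ^ 2)| := by
        congr 1; ring
    _ ≤ 2 * binGap μ ν q := (abs_add_le _ _).trans (by rw [binGap]; linarith)

end BinGap

section Coupling

variable {Ω : Type*} [MeasurableSpace Ω] {P : Measure Ω}

lemma binNeg_map {v y : Ω → ℝ} (hv : Measurable v) (hy : Measurable y) (q : ℝ) :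
    binNeg (P.map fun ω => (v ω, y ω)) q =
      ∫ ω, (v ω - y ω) * (if v ω < q then 1 else 0) ∂P :=
  integral_map (hv.prodMk hy).aemeasurable (Measurable.aestronglyMeasurable (by fun_prop))

lemma binPos_map {v y : Ω → ℝ} (hv : Measurable v) (hy : Measurable y) (q : ℝ) :
    binPos (P.map fun ω => (v ω, y ω)) q =
      ∫ ω, (v ω - y ω) * (if q ≤ v ω then 1 else 0) ∂P :=
  integral_map (hv.prodMk hy).aemeasurable (Measurable.aestronglyMeasurable (by fun_prop))

lemma ae_abs_sub_le_one {f g : Ω → ℝ} (hf : ∀ᵐ ω ∂P, f ω ∈ Set.Icc (0:ℝ) 1)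
    (hg : ∀ᵐ ω ∂P, g ω ∈ Set.Icc (0:ℝ) 1) : ∀ᵐ ω ∂P, |f ω - g ω| ≤ 1 := by
  filter_upwards [hf, hg] with ω using Real.dist_le_of_mem_Icc_01

lemma ae_abs_sub_le_one_map {v y : Ω → ℝ} (hv : Measurable v) (hy : Measurable y)
    (hvy : ∀ᵐ ω ∂P, |v ω - y ω| ≤ 1) :
    ∀ᵐ x ∂(P.map fun ω => (v ω, y ω)), |x.1 - x.2| ≤ 1 :=
  (ae_map_iff (hv.prodMk hy).aemeasurable
    (measurableSet_le (by fun_prop) measurable_const)).mpr hvy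

variable [IsProbabilityMeasure P]

lemma integrable_sub_mul_ite_lt {v y : Ω → ℝ} (hv : Measurable v) (hy : Measurable y)
    (hvy : ∀ᵐ ω ∂P, |v ω - y ω| ≤ 1) (q : ℝ) :
    Integrable (fun ω => (v ω - y ω) * (if v ω < q then 1 else 0)) P :=
  .of_bound (Measurable.aestronglyMeasurable (by fun_prop)) 1
    (hvy.mono fun _ h => (Real.norm_eq_abs _).trans_le (abs_mul_ite_le_one h _))

lemma integrable_sub_mul_ite_le {v y : Ω → ℝ} (hv : Measurable v) (hy : Measurable y)
    (hvy : ∀ᵐ ω ∂P, |v ω - y ω| ≤ 1) (q : ℝ) :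
    Integrable (fun ω => (v ω - y ω) * (if q ≤ v ω then 1 else 0)) P :=
  .of_bound (Measurable.aestronglyMeasurable (by fun_prop)) 1
    (hvy.mono fun _ h => (Real.norm_eq_abs _).trans_le (abs_mul_ite_le_one h _))

variable {v₁ v₂ y : Ω → ℝ} (hv₁ : Measurable v₁) (hv₂ : Measurable v₂) (hy : Measurable y)
  (h₁ : ∀ᵐ ω ∂P, v₁ ω ∈ Set.Icc (0:ℝ) 1) (h₂ : ∀ᵐ ω ∂P, v₂ ω ∈ Set.Icc (0:ℝ) 1)
  (hy₀₁ : ∀ᵐ ω ∂P, y ω ∈ Set.Icc (0:ℝ) 1)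
include hv₁ hv₂ hy h₁ h₂ hy₀₁

lemma binGap_map_le (q : ℝ) :
    binGap (P.map fun ω => (v₁ ω, y ω)) (P.map fun ω => (v₂ ω, y ω)) q ≤
      ∫ ω, binGapBound (v₁ ω) (v₂ ω) q ∂P := by
  have h₁y := ae_abs_sub_le_one h₁ hy₀₁
  have h₂y := ae_abs_sub_le_one h₂ hy₀₁
  have hN₁ := integrable_sub_mul_ite_lt hv₁ hy h₁y q
  have hN₂ := integrable_sub_mul_ite_lt hv₂ hy h₂y q
  have hP₁ := integrable_sub_mul_ite_le hv₁ hy h₁y q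
  have hP₂ := integrable_sub_mul_ite_le hv₂ hy h₂y q
  have hbound : Integrable (fun ω => binGapBound (v₁ ω) (v₂ ω) q) P :=
    .of_bound (Measurable.aestronglyMeasurable (by fun_prop)) 3 <| by
      filter_upwards [ae_abs_sub_le_one h₁ h₂] with ω hω
      rw [Real.norm_eq_abs, abs_of_nonneg (binGapBound_nonneg _ _ _)]
      linarith [binGapBound_le (v₁ ω) (v₂ ω) q]
  rw [binGap, binNeg_map hv₁ hy, binNeg_map hv₂ hy, binPos_map hv₁ hy, binPos_map hv₂ hy,
    ← integral_sub hN₁ hN₂, ← integral_sub hP₁ hP₂]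
  refine (add_le_add abs_integral_le_integral_abs abs_integral_le_integral_abs).trans <|
    (integral_add (hN₁.sub hN₂).abs (hP₁.sub hP₂).abs).symm.trans_le <|
      integral_mono_ae ((hN₁.sub hN₂).abs.add (hP₁.sub hP₂).abs) hbound ?_
  filter_upwards [h₁y, h₂y] with ω hω₁ hω₂ using abs_sub_binTerms_le hω₁ hω₂ q

lemma integral_binGap_map_le :
    ∫ q in (0:ℝ)..1, binGap (P.map fun ω => (v₁ ω, y ω)) (P.map fun ω => (v₂ ω, y ω)) q ≤
      3 * ∫ ω, |v₁ ω - v₂ ω| ∂P := by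
  have hv₁₂ : Integrable (fun ω => |v₁ ω - v₂ ω|) P :=
    .of_bound (Measurable.aestronglyMeasurable (by fun_prop)) 1
      ((ae_abs_sub_le_one h₁ h₂).mono fun _ h => by rwa [Real.norm_eq_abs, abs_abs])
  have : IsFiniteMeasure (volume.restrict (Set.uIoc (0:ℝ) 1)) := by
    rw [Set.uIoc_of_le zero_le_one]; infer_instance
  have hbound : Integrable (Function.uncurry fun q ω => binGapBound (v₁ ω) (v₂ ω) q)
      ((volume.restrict (Set.uIoc 0 1)).prod P) :=
    ((hv₁₂.comp_snd _).add (integrable_const 2)).mono'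
      (Measurable.aestronglyMeasurable (by fun_prop)) <| ae_of_all _ fun _ =>
        (abs_of_nonneg (binGapBound_nonneg _ _ _)).trans_le (binGapBound_le _ _ _)
  have := Measure.isProbabilityMeasure_map (μ := P) (hv₁.prodMk hy).aemeasurable
  have := Measure.isProbabilityMeasure_map (μ := P) (hv₂.prodMk hy).aemeasurable
  have hμ := ae_abs_sub_le_one_map hv₁ hy (ae_abs_sub_le_one h₁ hy₀₁)
  have hν := ae_abs_sub_le_one_map hv₂ hy (ae_abs_sub_le_one h₂ hy₀₁)
  calc _ ≤ ∫ q in (0:ℝ)..1, ∫ ω, binGapBound (v₁ ω) (v₂ ω) q ∂P :=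
        intervalIntegral.integral_mono_on zero_le_one (intervalIntegrable_binGap hμ hν 0 1)
          (intervalIntegrable_iff.mpr hbound.integral_prod_left)
          fun q _ => binGap_map_le hv₁ hv₂ hy h₁ h₂ hy₀₁ q
    _ = ∫ ω, (∫ q in (0:ℝ)..1, binGapBound (v₁ ω) (v₂ ω) q) ∂P :=
        intervalIntegral_integral_swap hbound
    _ = ∫ ω, 3 * |v₁ ω - v₂ ω| ∂P :=
        integral_congr_ae <| by
          filter_upwards [h₁, h₂] with ω hω₁ hω₂ using integral_binGapBound hω₁ hω₂
    _ = 3 * ∫ ω, |v₁ ω - v₂ ω| ∂P := integral_const_mul 3 _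

end Coupling

/-- Continuity of ATB and ℓ1-ATB: if `P` is a coupling of `(v₁, v₂, y)` with marginals
`J₁` (of `(v₁,y)`) and `J₂` (of `(v₂,y)`), both errors move by at most a multiple of
`E_P |v₁ - v₂|`. -/
theorem atb_continuity (P : Measure (ℝ × ℝ × ℝ)) [IsProbabilityMeasure P]
    (hsupp : ∀ᵐ x ∂P, x.1 ∈ Set.Icc (0:ℝ) 1 ∧ x.2.1 ∈ Set.Icc (0:ℝ) 1 ∧
      (x.2.2 = 0 ∨ x.2.2 = 1)) :
    |l1ATB (P.map (fun x => (x.1, x.2.2))) - l1ATB (P.map (fun x => (x.2.1, x.2.2)))|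
        ≤ 3 * ∫ x, |x.1 - x.2.1| ∂P ∧
    |ATB (P.map (fun x => (x.1, x.2.2))) - ATB (P.map (fun x => (x.2.1, x.2.2)))|
        ≤ 6 * ∫ x, |x.1 - x.2.1| ∂P := by
  have hv₁ : Measurable fun x : ℝ × ℝ × ℝ => x.1 := measurable_fst
  have hv₂ : Measurable fun x : ℝ × ℝ × ℝ => x.2.1 := measurable_snd.fst
  have hy : Measurable fun x : ℝ × ℝ × ℝ => x.2.2 := measurable_snd.snd
  have h₁ := hsupp.mono fun _ h => h.1
  have h₂ := hsupp.mono fun _ h => h.2.1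
  have hy₀₁ : ∀ᵐ x ∂P, x.2.2 ∈ Set.Icc (0:ℝ) 1 :=
    hsupp.mono fun _ h => by rcases h.2.2 with h | h <;> simp [h]
  have := Measure.isProbabilityMeasure_map (μ := P) (hv₁.prodMk hy).aemeasurable
  have := Measure.isProbabilityMeasure_map (μ := P) (hv₂.prodMk hy).aemeasurable
  have hμ := ae_abs_sub_le_one_map hv₁ hy (ae_abs_sub_le_one h₁ hy₀₁)
  have hν := ae_abs_sub_le_one_map hv₂ hy (ae_abs_sub_le_one h₂ hy₀₁)
  have hgap := integral_binGap_map_le hv₁ hv₂ hy h₁ h₂ hy₀₁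
  exact ⟨(abs_l1ATB_sub_le hμ hν).trans hgap, (abs_ATB_sub_le hμ hν).trans (by linarith)⟩

end
end

section
/- For every probability distribution J on [0,1] × {0,1}, ℓ1-ATB(J) ≤ 3 · distCal(J), where distCal is the lower distance to calibration. -/
open MeasureTheory Finset
open scoped ENNReal

noncomputable section

/-- A distribution of `(v, y)` is calibrated if `E[y | v] = v` almost surely; equivalently,
`∫ y = ∫ v` over every event measurable in the prediction `v`. -/
def Calibrated (mu : Measure (ℝ × ℝ)) : Prop :=
  ∀ s : Set ℝ, MeasurableSet s →
    ∫ x in Prod.fst ⁻¹' s, x.2 ∂mu = ∫ x in Prod.fst ⁻¹' s, x.1 ∂mu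

/-- The lower distance to calibration: the infimum of `E |u - v|` over couplings `(u, v, y)`
whose `(v,y)`-marginal is `mu` and whose `(u,y)`-marginal is calibrated. -/
def distCal (mu : Measure (ℝ × ℝ)) : ℝ :=
  sInf { c : ℝ | ∃ P : Measure (ℝ × ℝ × ℝ), IsProbabilityMeasure P ∧
    P.map (fun x => x.2) = mu ∧
    Calibrated (P.map (fun x => (x.1, x.2.2))) ∧
    (∀ᵐ x ∂P, x.1 ∈ Set.Icc (0:ℝ) 1) ∧
    c = ∫ x, |x.1 - x.2.1| ∂P }

/-! Let `(u, v, y)` be a coupling whose `(u, y)`-marginal is calibrated. Every bin of `u` is then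
unbiased, so each bin bias of `v` is the expectation of the difference between the contributions of
`v` and of `u` to that bin. For a threshold `q`, the two differences together are at most `|u - v|`
when `u` and `v` lie on the same side of `q`, and at most `2` when `q` separates them; averaged
over `q ∈ [0, 1]`, the latter happens with probability `|u - v|`. Hence
`ℓ1-ATB ≤ E|u - v| + 2 E|u - v|`, and the infimum over couplings gives the claim. -/

open scoped Interval

lemma abs_indicator_sub_add_abs_indicator_sub_le {u v y q : ℝ} (hu : |u - y| ≤ 1)
    (hv : |v - y| ≤ 1) :
    |(Set.Iio q).indicator (· - y) v - (Set.Iio q).indicator (· - y) u| +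
      |(Set.Ici q).indicator (· - y) v - (Set.Ici q).indicator (· - y) u| ≤
    |u - v| + 2 * (Ι u v).indicator 1 q := by
  rcases lt_or_ge v q with hvq | hqv <;> rcases lt_or_ge u q with huq | hqu
  · simp [hvq, huq, hvq.not_ge, huq.not_ge, abs_sub_comm, Set.indicator_nonneg]
  · have : q ∈ Ι u v := Set.mem_uIoc.2 (Or.inr ⟨hvq, hqu⟩)
    simp [hvq, hqu, hqu.not_gt, hvq.not_ge, this]
    linarith [abs_nonneg (u - v), abs_sub_comm u y]
  · have : q ∈ Ι u v := Set.mem_uIoc.2 (Or.inl ⟨huq, hqv⟩)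
    simp [hqv, huq, hqv.not_gt, huq.not_ge, this]
    linarith [abs_nonneg (u - v), abs_sub_comm u y]
  · simp [hqv, hqu, hqv.not_gt, hqu.not_gt, abs_sub_comm, Set.indicator_nonneg]

lemma binNeg_eq_setIntegral (mu : Measure (ℝ × ℝ)) (q : ℝ) :
    binNeg mu q = ∫ x in Prod.fst ⁻¹' Set.Iio q, (x.1 - x.2) ∂mu := by
  rw [← integral_indicator (measurable_fst measurableSet_Iio), binNeg]
  congr with x
  simp [Set.indicator, mul_ite]

lemma binPos_eq_setIntegral (mu : Measure (ℝ × ℝ)) (q : ℝ) :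
    binPos mu q = ∫ x in Prod.fst ⁻¹' Set.Ici q, (x.1 - x.2) ∂mu := by
  rw [← integral_indicator (measurable_fst measurableSet_Ici), binPos]
  congr with x
  simp [Set.indicator, mul_ite]

lemma Calibrated.setIntegral_sub_eq_zero {ν : Measure (ℝ × ℝ)} (hcal : Calibrated ν)
    (h1 : Integrable Prod.fst ν) (h2 : Integrable Prod.snd ν) {s : Set ℝ}
    (hs : MeasurableSet s) :
    ∫ x in Prod.fst ⁻¹' s, (x.1 - x.2) ∂ν = 0 := by
  rw [integral_sub h1.integrableOn h2.integrableOn, hcal s hs, sub_self]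

lemma calibrated_map_diag {α : Type*} [MeasurableSpace α] (P : Measure α) {f : α → ℝ}
    (hf : Measurable f) : Calibrated (P.map fun x => (f x, f x)) := by
  intro s hs
  have hg : Measurable fun x => (f x, f x) := hf.prodMk hf
  rw [setIntegral_map (measurable_fst hs) (by fun_prop) hg.aemeasurable,
    setIntegral_map (measurable_fst hs) (by fun_prop) hg.aemeasurable]

lemma measurableSet_mem_uIoc {α : Type*} [MeasurableSpace α] {f u v : α → ℝ} (hf : Measurable f)
    (hu : Measurable u) (hv : Measurable v) : MeasurableSet {x | f x ∈ Ι (u x) (v x)} :=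
  (measurableSet_lt (hu.min hv) hf).inter (measurableSet_le hf (hu.max hv))

section Fubini

variable {α : Type*} [MeasurableSpace α] {P : Measure α} [IsFiniteMeasure P] {u v : α → ℝ}

lemma integrable_indicator_uIoc_prod {μ : Measure ℝ} [IsFiniteMeasure μ]
    (hu : Measurable u) (hv : Measurable v) :
    Integrable (Function.uncurry fun q x => (Ι (u x) (v x)).indicator (1 : ℝ → ℝ) q)
      (μ.prod P) :=
  (integrable_const (1 : ℝ)).indicator
    (measurableSet_mem_uIoc measurable_fst (hu.comp measurable_snd) (hv.comp measurable_snd))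

lemma intervalIntegrable_integral_indicator_uIoc (hu : Measurable u) (hv : Measurable v) :
    IntervalIntegrable (fun q => ∫ x, (Ι (u x) (v x)).indicator (1 : ℝ → ℝ) q ∂P) volume 0 1 := by
  rw [intervalIntegrable_iff_integrableOn_Ioc_of_le zero_le_one]
  exact (integrable_indicator_uIoc_prod hu hv).integral_prod_left

lemma intervalIntegral_integral_indicator_uIoc (hu : Measurable u) (hv : Measurable v)
    (huv : ∀ᵐ x ∂P, u x ∈ Set.Icc 0 1 ∧ v x ∈ Set.Icc 0 1) :
    ∫ q in (0:ℝ)..1, ∫ x, (Ι (u x) (v x)).indicator (1 : ℝ → ℝ) q ∂P = ∫ x, |u x - v x| ∂P := by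
  rw [intervalIntegral.integral_of_le zero_le_one,
    integral_integral_swap (integrable_indicator_uIoc_prod hu hv)]
  refine integral_congr_ae (huv.mono fun x ⟨hux, hvx⟩ => ?_)
  have hsub : Ι (u x) (v x) ⊆ Set.Ioc 0 1 :=
    Set.Ioc_subset_Ioc (le_min hux.1 hvx.1) (max_le hux.2 hvx.2)
  dsimp only
  rw [integral_indicator_one measurableSet_uIoc, measureReal_restrict_apply measurableSet_uIoc,
    Set.inter_eq_left.2 hsub, measureReal_def, Real.volume_uIoc,
    ENNReal.toReal_ofReal (abs_nonneg _), abs_sub_comm]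

end Fubini

section Coupling

variable {P : Measure (ℝ × ℝ × ℝ)} [IsFiniteMeasure P]

lemma integrable_coords_of_ae_mem_Icc
    (hP : ∀ᵐ x ∂P, x.1 ∈ Set.Icc 0 1 ∧ x.2.1 ∈ Set.Icc 0 1 ∧ x.2.2 ∈ Set.Icc 0 1) :
    Integrable (fun x => x.1) P ∧ Integrable (fun x => x.2.1) P ∧ Integrable (fun x => x.2.2) P :=
  ⟨.of_mem_Icc 0 1 (by fun_prop) (hP.mono fun _ hx => hx.1),
    .of_mem_Icc 0 1 (by fun_prop) (hP.mono fun _ hx => hx.2.1),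
    .of_mem_Icc 0 1 (by fun_prop) (hP.mono fun _ hx => hx.2.2)⟩

lemma setIntegral_map_snd_eq_integral_sub (hcal : Calibrated (P.map fun x => (x.1, x.2.2)))
    (hP : ∀ᵐ x ∂P, x.1 ∈ Set.Icc 0 1 ∧ x.2.1 ∈ Set.Icc 0 1 ∧ x.2.2 ∈ Set.Icc 0 1)
    {s : Set ℝ} (hs : MeasurableSet s) :
    ∫ x in Prod.fst ⁻¹' s, (x.1 - x.2) ∂(P.map fun x => x.2) =
      ∫ x, (s.indicator (· - x.2.2) x.2.1 - s.indicator (· - x.2.2) x.1) ∂P := by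
  obtain ⟨hu, hv, hy⟩ := integrable_coords_of_ae_mem_Icc hP
  have hvy : Integrable (fun x => x.2.1 - x.2.2) P := hv.sub hy
  have huy : Integrable (fun x => x.1 - x.2.2) P := hu.sub hy
  have hg : Measurable fun x : ℝ × ℝ × ℝ => (x.1, x.2.2) := by fun_prop
  have hunbiased : ∫ x in (fun x => x.1) ⁻¹' s, (x.1 - x.2.2) ∂P = 0 := by
    have h := hcal.setIntegral_sub_eq_zero
      ((integrable_map_measure (by fun_prop) hg.aemeasurable).2 hu)
      ((integrable_map_measure (by fun_prop) hg.aemeasurable).2 hy) hs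
    rwa [setIntegral_map (measurable_fst hs) (by fun_prop) hg.aemeasurable] at h
  calc ∫ x in Prod.fst ⁻¹' s, (x.1 - x.2) ∂(P.map fun x => x.2)
      = ∫ x in (fun x => x.2.1) ⁻¹' s, (x.2.1 - x.2.2) ∂P -
          ∫ x in (fun x => x.1) ⁻¹' s, (x.1 - x.2.2) ∂P := by
        rw [setIntegral_map (measurable_fst hs) (by fun_prop) (by fun_prop), hunbiased, sub_zero]
        rfl
    _ = _ := by
        rw [← integral_indicator (measurable_snd.fst hs), ← integral_indicator (measurable_fst hs),
          ← integral_sub (hvy.indicator (measurable_snd.fst hs)) (huy.indicator (measurable_fst hs))]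
        rfl

lemma abs_binNeg_add_abs_binPos_map_snd_le (hcal : Calibrated (P.map fun x => (x.1, x.2.2)))
    (hP : ∀ᵐ x ∂P, x.1 ∈ Set.Icc 0 1 ∧ x.2.1 ∈ Set.Icc 0 1 ∧ x.2.2 ∈ Set.Icc 0 1) (q : ℝ) :
    |binNeg (P.map fun x => x.2) q| + |binPos (P.map fun x => x.2) q| ≤
      ∫ x, |x.1 - x.2.1| ∂P + 2 * ∫ x, (Ι x.1 x.2.1).indicator (1 : ℝ → ℝ) q ∂P := by
  rw [binNeg_eq_setIntegral, binPos_eq_setIntegral,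
    setIntegral_map_snd_eq_integral_sub hcal hP measurableSet_Iio,
    setIntegral_map_snd_eq_integral_sub hcal hP measurableSet_Ici]
  obtain ⟨hu, hv, hy⟩ := integrable_coords_of_ae_mem_Icc hP
  set F : Set ℝ → ℝ × ℝ × ℝ → ℝ := fun s x =>
    s.indicator (· - x.2.2) x.2.1 - s.indicator (· - x.2.2) x.1
  have hF : ∀ s, MeasurableSet s → Integrable (fun x => |F s x|) P := fun s hs =>
    (((hv.sub hy).indicator (measurable_snd.fst hs)).sub
      ((hu.sub hy).indicator (measurable_fst hs))).abs
  have hdist : Integrable (fun x => |x.1 - x.2.1|) P := (hu.sub hv).abs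
  have hind : Integrable (fun x => (Ι x.1 x.2.1).indicator (1 : ℝ → ℝ) q) P :=
    (integrable_const (1 : ℝ)).indicator
      (measurableSet_mem_uIoc measurable_const measurable_fst measurable_snd.fst)
  calc |∫ x, F (Set.Iio q) x ∂P| + |∫ x, F (Set.Ici q) x ∂P|
      ≤ ∫ x, |F (Set.Iio q) x| ∂P + ∫ x, |F (Set.Ici q) x| ∂P :=
        add_le_add abs_integral_le_integral_abs abs_integral_le_integral_abs
    _ = ∫ x, (|F (Set.Iio q) x| + |F (Set.Ici q) x|) ∂P :=
        (integral_add (hF _ measurableSet_Iio) (hF _ measurableSet_Ici)).symm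
    _ ≤ ∫ x, (|x.1 - x.2.1| + 2 * (Ι x.1 x.2.1).indicator 1 q) ∂P := by
        refine integral_mono_ae ((hF _ measurableSet_Iio).add (hF _ measurableSet_Ici))
          (hdist.add (hind.const_mul 2)) (hP.mono fun x ⟨hux, hvx, hyx⟩ =>
            abs_indicator_sub_add_abs_indicator_sub_le (Real.dist_le_of_mem_Icc_01 hux hyx)
              (Real.dist_le_of_mem_Icc_01 hvx hyx))
    _ = ∫ x, |x.1 - x.2.1| ∂P + 2 * ∫ x, (Ι x.1 x.2.1).indicator 1 q ∂P := by
        rw [integral_add hdist (hind.const_mul 2), integral_const_mul]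

lemma l1ATB_map_snd_le (hcal : Calibrated (P.map fun x => (x.1, x.2.2)))
    (hP : ∀ᵐ x ∂P, x.1 ∈ Set.Icc 0 1 ∧ x.2.1 ∈ Set.Icc 0 1 ∧ x.2.2 ∈ Set.Icc 0 1) :
    l1ATB (P.map fun x => x.2) ≤ 3 * ∫ x, |x.1 - x.2.1| ∂P := by
  set c := ∫ x, |x.1 - x.2.1| ∂P with hc
  have hφ := intervalIntegrable_integral_indicator_uIoc (P := P) measurable_fst measurable_snd.fst
  rw [l1ATB]
  by_cases hint : IntervalIntegrable
      (fun q => |binNeg (P.map fun x => x.2) q| + |binPos (P.map fun x => x.2) q|) volume 0 1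
  · calc _ ≤ ∫ q in (0:ℝ)..1, (c + 2 * ∫ x, (Ι x.1 x.2.1).indicator (1 : ℝ → ℝ) q ∂P) :=
          intervalIntegral.integral_mono_on zero_le_one hint
            (intervalIntegrable_const.add (hφ.const_mul 2))
            fun q _ => abs_binNeg_add_abs_binPos_map_snd_le hcal hP q
      _ = c + 2 * c := by
          rw [intervalIntegral.integral_add intervalIntegrable_const (hφ.const_mul 2),
            intervalIntegral.integral_const_mul, intervalIntegral_integral_indicator_uIoc
              measurable_fst measurable_snd.fst (hP.mono fun _ hx => ⟨hx.1, hx.2.1⟩)]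
          simp [hc]
      _ = 3 * c := by ring
  · rw [intervalIntegral.integral_undef hint]
    exact mul_nonneg zero_le_three (integral_nonneg fun _ => abs_nonneg _)

end Coupling

/-- Predicting the outcome itself is calibrated. -/
lemma exists_calibrated_coupling (mu : Measure (ℝ × ℝ)) [IsProbabilityMeasure mu]
    (hy : ∀ᵐ x ∂mu, x.2 ∈ Set.Icc (0:ℝ) 1) :
    ∃ P : Measure (ℝ × ℝ × ℝ), IsProbabilityMeasure P ∧ P.map (fun x => x.2) = mu ∧
      Calibrated (P.map (fun x => (x.1, x.2.2))) ∧ ∀ᵐ x ∂P, x.1 ∈ Set.Icc (0:ℝ) 1 := by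
  have hm : Measurable fun z : ℝ × ℝ => (z.2, z) := by fun_prop
  refine ⟨mu.map fun z => (z.2, z), Measure.isProbabilityMeasure_map hm.aemeasurable, ?_, ?_, ?_⟩
  · rw [Measure.map_map measurable_snd hm]
    exact Measure.map_id
  · rw [Measure.map_map (by fun_prop) hm]
    exact calibrated_map_diag mu measurable_snd
  · exact ae_map_iff hm.aemeasurable (measurable_fst measurableSet_Icc) |>.2 hy

/-- ℓ1-ATB is at most three times the lower distance to calibration. -/
theorem l1atb_le_distCal (mu : Measure (ℝ × ℝ)) [IsProbabilityMeasure mu]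
    (hsupp : ∀ᵐ x ∂mu, x.1 ∈ Set.Icc (0:ℝ) 1 ∧ (x.2 = 0 ∨ x.2 = 1)) :
    l1ATB mu ≤ 3 * distCal mu := by
  have hunit : ∀ᵐ x ∂mu, x.1 ∈ Set.Icc (0:ℝ) 1 ∧ x.2 ∈ Set.Icc (0:ℝ) 1 :=
    hsupp.mono fun x ⟨hv, hy⟩ => ⟨hv, by rcases hy with h | h <;> simp [h]⟩
  -- `sInf ∅ = 0`, so the set of couplings in `distCal` has to be shown nonempty.
  obtain ⟨P₀, hP₀, hmap₀, hcal₀, hu₀⟩ := exists_calibrated_coupling mu (hunit.mono fun _ h => h.2)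
  rw [distCal, ← div_le_iff₀' three_pos]
  refine le_csInf ⟨_, P₀, hP₀, hmap₀, hcal₀, hu₀, rfl⟩ ?_
  rintro _ ⟨P, hP, rfl, hcal, hu, rfl⟩
  rw [div_le_iff₀' three_pos]
  refine l1ATB_map_snd_le hcal ?_
  filter_upwards [hu, ae_of_ae_map (by fun_prop) hunit] with x hux hvy using ⟨hux, hvy⟩

end
end

section
/- For every positive integer T, every prediction sequence r ∈ [0,1]^T, and every state sequence y ∈ {0,1}^T, the smooth calibration error is bounded by the ℓ1 averaged two-bin calibration error: smCal(r,y) ≤ (3/2) · ℓ1-ATB(r,y). -/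
open MeasureTheory Finset

noncomputable section

/-- ℓ1 variant of the averaged two-bin calibration error on sequences. -/
def l1atbSeq {T : ℕ} (r y : Fin T → ℝ) : ℝ :=
  ∫ q in (0:ℝ)..1, (1 / (T:ℝ)) *
    (|∑ t, if r t < q then (r t - y t) else 0| +
     |∑ t, if q ≤ r t then (r t - y t) else 0|)

/-- Smooth calibration error on sequences: the supremum of `(1/T) ∑ (r t - y t) * w (r t)`
over 1-Lipschitz weight functions `w : [0,1] → [-1,1]`. -/
def smCalSeq {T : ℕ} (r y : Fin T → ℝ) : ℝ :=
  sSup { c : ℝ | ∃ w : ℝ → ℝ, LipschitzOnWith 1 w (Set.Icc 0 1) ∧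
    (∀ x ∈ Set.Icc (0:ℝ) 1, w x ∈ Set.Icc (-1:ℝ) 1) ∧
    c = (1 / (T:ℝ)) * ∑ t, (r t - y t) * w (r t) }

/-! The fundamental theorem of calculus for the Lipschitz weight `w` turns
`∑ t, (r t - y t) * (w (r t) - w 0)` into `∫₀¹ w' q * U q`, where `U q` is the total residual of
the upper bin `{t | q ≤ r t}`; as `|w'| ≤ 1` this is at most `∫₀¹ |U|`. Symmetrically,
`∑ t, (r t - y t) * (w 1 - w (r t))` is at most `∫₀¹ |L|` for the lower bin `{t | r t < q}`.
Since `L q + U q` is the total residual `E` for every `q`, also `|E| ≤ ∫₀¹ |L| + ∫₀¹ |U|`, and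
`|w 0|, |w 1| ≤ 1` give `∑ t, (r t - y t) * w (r t) ≤ min (∫₀¹ |L|) (∫₀¹ |U|) + |E|
≤ 3/2 * (∫₀¹ |L| + ∫₀¹ |U|)`. -/

open Set intervalIntegral

lemma IntervalIntegrable.indicator {E : Type*} [NormedAddCommGroup E] {f : ℝ → E} {μ : Measure ℝ}
    {a b : ℝ} {s : Set ℝ} (hf : IntervalIntegrable f μ a b) (hs : MeasurableSet s) :
    IntervalIntegrable (s.indicator f) μ a b :=
  ⟨hf.1.indicator hs, hf.2.indicator hs⟩

section BinSums

variable {ι : Type*} [Fintype ι]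

def upperBinSum (e ρ : ι → ℝ) (q : ℝ) : ℝ := ∑ t, if q ≤ ρ t then e t else 0

def lowerBinSum (e ρ : ι → ℝ) (q : ℝ) : ℝ := ∑ t, if ρ t < q then e t else 0

variable (e ρ : ι → ℝ)

lemma lowerBinSum_add_upperBinSum (q : ℝ) :
    lowerBinSum e ρ q + upperBinSum e ρ q = ∑ t, e t := by
  rw [lowerBinSum, upperBinSum, ← sum_add_distrib]
  refine sum_congr rfl fun t _ => ?_
  by_cases h : ρ t < q
  · simp [h, h.not_ge]
  · simp [h, not_lt.1 h]

lemma intervalIntegrable_upperBinSum (a b : ℝ) :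
    IntervalIntegrable (upperBinSum e ρ) volume a b := by
  have : upperBinSum e ρ = ∑ t, (Iic (ρ t)).indicator fun _ => e t := by
    ext q; simp [upperBinSum, indicator_apply]
  rw [this]
  exact IntervalIntegrable.sum _ fun t _ =>
    intervalIntegrable_const.indicator measurableSet_Iic

lemma intervalIntegrable_lowerBinSum (a b : ℝ) :
    IntervalIntegrable (lowerBinSum e ρ) volume a b := by
  have : lowerBinSum e ρ = fun q => ∑ t, e t - upperBinSum e ρ q := by
    ext q; rw [← lowerBinSum_add_upperBinSum e ρ q, add_sub_cancel_right]
  rw [this]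
  exact intervalIntegrable_const.sub (intervalIntegrable_upperBinSum e ρ a b)

lemma mul_abs_sum_le_integral_abs_lowerBinSum_add_upperBinSum {a b : ℝ} (hab : a ≤ b) :
    (b - a) * |∑ t, e t| ≤
      (∫ q in a..b, |lowerBinSum e ρ q|) + ∫ q in a..b, |upperBinSum e ρ q| := by
  rw [← smul_eq_mul, ← intervalIntegral.integral_const, ← integral_add
    (intervalIntegrable_lowerBinSum e ρ a b).abs (intervalIntegrable_upperBinSum e ρ a b).abs]
  refine integral_mono_on hab intervalIntegrable_const
    ((intervalIntegrable_lowerBinSum e ρ a b).abs.add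
      (intervalIntegrable_upperBinSum e ρ a b).abs) fun q _ => ?_
  rw [← lowerBinSum_add_upperBinSum e ρ q]
  exact abs_add_le _ _

end BinSums

section FTC

variable {f : ℝ → ℝ} {a c x : ℝ}

lemma integral_indicator_Iic_deriv (hf : AbsolutelyContinuousOnInterval f a c)
    (hx : x ∈ Icc a c) : ∫ q in a..c, (Iic x).indicator (deriv f) q = f x - f a := by
  rw [integral_of_le (hx.1.trans hx.2), setIntegral_indicator measurableSet_Iic, Ioc_inter_Iic,
    inf_eq_right.2 hx.2, ← integral_of_le hx.1]
  exact (hf.mono (uIcc_subset_uIcc_left (Icc_subset_uIcc hx))).integral_deriv_eq_sub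

lemma integral_indicator_Ioi_deriv (hf : AbsolutelyContinuousOnInterval f a c)
    (hx : x ∈ Icc a c) : ∫ q in a..c, (Ioi x).indicator (deriv f) q = f c - f x := by
  rw [integral_of_le (hx.1.trans hx.2), setIntegral_indicator measurableSet_Ioi, Ioc_inter_Ioi,
    sup_eq_right.2 hx.1, ← integral_of_le hx.2]
  exact (hf.mono (uIcc_subset_uIcc_right (Icc_subset_uIcc hx))).integral_deriv_eq_sub

end FTC

section Lipschitz

variable {ι : Type*} [Fintype ι] (e ρ : ι → ℝ) {f : ℝ → ℝ} {a c : ℝ}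

lemma sum_mul_sub_eq_integral_deriv_mul_upperBinSum (hf : AbsolutelyContinuousOnInterval f a c)
    (hρ : ∀ t, ρ t ∈ Icc a c) :
    ∑ t, e t * (f (ρ t) - f a) = ∫ q in a..c, deriv f q * upperBinSum e ρ q := by
  calc ∑ t, e t * (f (ρ t) - f a)
      = ∑ t, ∫ q in a..c, e t * (Iic (ρ t)).indicator (deriv f) q := by
        refine sum_congr rfl fun t _ => ?_
        rw [intervalIntegral.integral_const_mul, integral_indicator_Iic_deriv hf (hρ t)]
    _ = ∫ q in a..c, ∑ t, e t * (Iic (ρ t)).indicator (deriv f) q :=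
        (integral_finsetSum fun t _ =>
          (hf.intervalIntegrable_deriv.indicator measurableSet_Iic).const_mul _).symm
    _ = ∫ q in a..c, deriv f q * upperBinSum e ρ q := by
        refine integral_congr fun q _ => ?_
        simp only [upperBinSum, mul_sum, indicator_apply, Set.mem_Iic, mul_ite, mul_zero,
          mul_comm]

lemma sum_mul_sub_eq_integral_deriv_mul_lowerBinSum (hf : AbsolutelyContinuousOnInterval f a c)
    (hρ : ∀ t, ρ t ∈ Icc a c) :
    ∑ t, e t * (f c - f (ρ t)) = ∫ q in a..c, deriv f q * lowerBinSum e ρ q := by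
  calc ∑ t, e t * (f c - f (ρ t))
      = ∑ t, ∫ q in a..c, e t * (Ioi (ρ t)).indicator (deriv f) q := by
        refine sum_congr rfl fun t _ => ?_
        rw [intervalIntegral.integral_const_mul, integral_indicator_Ioi_deriv hf (hρ t)]
    _ = ∫ q in a..c, ∑ t, e t * (Ioi (ρ t)).indicator (deriv f) q :=
        (integral_finsetSum fun t _ =>
          (hf.intervalIntegrable_deriv.indicator measurableSet_Ioi).const_mul _).symm
    _ = ∫ q in a..c, deriv f q * lowerBinSum e ρ q := by
        refine integral_congr fun q _ => ?_
        simp only [lowerBinSum, mul_sum, indicator_apply, Set.mem_Ioi, mul_ite, mul_zero,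
          mul_comm]

lemma abs_integral_deriv_mul_le {K : NNReal} {g : ℝ → ℝ} (hf : LipschitzOnWith K f (Icc a c))
    (hac : a ≤ c) (hg : IntervalIntegrable g volume a c) :
    |∫ q in a..c, deriv f q * g q| ≤ K * ∫ q in a..c, |g q| := by
  have hderiv : ∀ q ∈ Ioo a c, |deriv f q| ≤ K := fun q hq =>
    norm_deriv_le_of_lipschitzOn (Icc_mem_nhds hq.1 hq.2) hf
  calc |∫ q in a..c, deriv f q * g q|
      ≤ ∫ q in a..c, |deriv f q * g q| := abs_integral_le_integral_abs hac
    _ ≤ ∫ q in a..c, K * |g q| := by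
        simp only [integral_of_le hac, integral_Ioc_eq_integral_Ioo]
        refine integral_mono_of_nonneg (ae_of_all _ fun _ => abs_nonneg _)
          ((hg.1.mono_set Ioo_subset_Ioc_self).abs.const_mul _) ?_
        filter_upwards [ae_restrict_mem measurableSet_Ioo] with q hq
        rw [abs_mul]
        exact mul_le_mul_of_nonneg_right (hderiv q hq) (abs_nonneg _)
    _ = K * ∫ q in a..c, |g q| := intervalIntegral.integral_const_mul _ _

lemma abs_sum_mul_sub_left_le {K : NNReal} (hf : LipschitzOnWith K f (Icc a c)) (hac : a ≤ c)
    (hρ : ∀ t, ρ t ∈ Icc a c) :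
    |∑ t, e t * (f (ρ t) - f a)| ≤ K * ∫ q in a..c, |upperBinSum e ρ q| := by
  rw [sum_mul_sub_eq_integral_deriv_mul_upperBinSum e ρ
    (hf.mono (uIcc_of_le hac).le).absolutelyContinuousOnInterval hρ]
  exact abs_integral_deriv_mul_le hf hac (intervalIntegrable_upperBinSum e ρ a c)

lemma abs_sum_mul_sub_right_le {K : NNReal} (hf : LipschitzOnWith K f (Icc a c)) (hac : a ≤ c)
    (hρ : ∀ t, ρ t ∈ Icc a c) :
    |∑ t, e t * (f c - f (ρ t))| ≤ K * ∫ q in a..c, |lowerBinSum e ρ q| := by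
  rw [sum_mul_sub_eq_integral_deriv_mul_lowerBinSum e ρ
    (hf.mono (uIcc_of_le hac).le).absolutelyContinuousOnInterval hρ]
  exact abs_integral_deriv_mul_le hf hac (intervalIntegrable_lowerBinSum e ρ a c)

end Lipschitz

lemma sum_mul_le_three_halves_integral_abs_binSums {ι : Type*} [Fintype ι] (e ρ : ι → ℝ)
    {w : ℝ → ℝ} (hw : LipschitzOnWith 1 w (Icc 0 1)) (hw₀ : |w 0| ≤ 1) (hw₁ : |w 1| ≤ 1)
    (hρ : ∀ t, ρ t ∈ Icc (0 : ℝ) 1) :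
    ∑ t, e t * w (ρ t) ≤ 3 / 2 *
      ((∫ q in (0 : ℝ)..1, |lowerBinSum e ρ q|) + ∫ q in (0 : ℝ)..1, |upperBinSum e ρ q|) := by
  set A := ∫ q in (0 : ℝ)..1, |lowerBinSum e ρ q|
  set B := ∫ q in (0 : ℝ)..1, |upperBinSum e ρ q|
  have hE : |∑ t, e t| ≤ A + B := by
    simpa using mul_abs_sum_le_integral_abs_lowerBinSum_add_upperBinSum e ρ zero_le_one
  have hB : |∑ t, e t * (w (ρ t) - w 0)| ≤ B := by
    simpa using abs_sum_mul_sub_left_le e ρ hw zero_le_one hρ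
  have hA : |∑ t, e t * (w 1 - w (ρ t))| ≤ A := by
    simpa using abs_sum_mul_sub_right_le e ρ hw zero_le_one hρ
  have hw₀E : |w 0 * ∑ t, e t| ≤ |∑ t, e t| := by
    rw [abs_mul]; exact mul_le_of_le_one_left (abs_nonneg _) hw₀
  have hw₁E : |w 1 * ∑ t, e t| ≤ |∑ t, e t| := by
    rw [abs_mul]; exact mul_le_of_le_one_left (abs_nonneg _) hw₁
  have h₀ : ∑ t, e t * w (ρ t) = ∑ t, e t * (w (ρ t) - w 0) + w 0 * ∑ t, e t := by
    rw [mul_sum, ← sum_add_distrib]; exact sum_congr rfl fun t _ => by ring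
  have h₁ : ∑ t, e t * w (ρ t) = w 1 * ∑ t, e t - ∑ t, e t * (w 1 - w (ρ t)) := by
    rw [mul_sum, ← sum_sub_distrib]; exact sum_congr rfl fun t _ => by ring
  linarith [(abs_le.1 hA).1, (abs_le.1 hB).2, (abs_le.1 hw₀E).2, (abs_le.1 hw₁E).2]

lemma l1atbSeq_eq {T : ℕ} (r y : Fin T → ℝ) :
    l1atbSeq r y = 1 / (T : ℝ) * ((∫ q in (0 : ℝ)..1, |lowerBinSum (r - y) r q|) +
      ∫ q in (0 : ℝ)..1, |upperBinSum (r - y) r q|) := by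
  rw [l1atbSeq, intervalIntegral.integral_const_mul, ← integral_add
    (intervalIntegrable_lowerBinSum _ _ 0 1).abs (intervalIntegrable_upperBinSum _ _ 0 1).abs]
  rfl

theorem smCal_le_l1atb_general (T : ℕ) (r y : Fin T → ℝ)
    (hr : ∀ t, r t ∈ Set.Icc (0:ℝ) 1) :
    smCalSeq r y ≤ (3 / 2) * l1atbSeq r y := by
  rw [l1atbSeq_eq]
  refine Real.sSup_le ?_ ?_
  · rintro c ⟨w, hw, hw_range, rfl⟩
    have h := sum_mul_le_three_halves_integral_abs_binSums (r - y) r hw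
      (abs_le.2 (hw_range 0 (left_mem_Icc.2 zero_le_one)))
      (abs_le.2 (hw_range 1 (right_mem_Icc.2 zero_le_one))) hr
    calc _ ≤ 1 / (T : ℝ) * _ := mul_le_mul_of_nonneg_left h (by positivity)
      _ = _ := by ring
  · have hA : 0 ≤ ∫ q in (0 : ℝ)..1, |lowerBinSum (r - y) r q| :=
      integral_nonneg zero_le_one fun q _ => abs_nonneg _
    have hB : 0 ≤ ∫ q in (0 : ℝ)..1, |upperBinSum (r - y) r q| :=
      integral_nonneg zero_le_one fun q _ => abs_nonneg _
    positivity

/-- The smooth calibration error is at most `3/2` times the ℓ1 averaged two-bin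
calibration error. -/
theorem smCal_le_l1atb (T : ℕ) (hT : 0 < T) (r y : Fin T → ℝ)
    (hr : ∀ t, r t ∈ Set.Icc (0:ℝ) 1) (hy : ∀ t, y t = 0 ∨ y t = 1) :
    smCalSeq r y ≤ (3 / 2) * l1atbSeq r y :=
  smCal_le_l1atb_general T r y hr

end
end

section
/- Let J be a calibrated probability distribution on [0,1] × {0,1}, let T be a positive integer, let (v_1,y_1),…,(v_T,y_T) be drawn i.i.d. from J, and let J_S be the uniform (empirical) distribution on these T points. Then Pr[ATB(J_S) ≤ 1/T] ≥ 3/4. -/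
open MeasureTheory Finset
open scoped ENNReal

noncomputable section

/-- The empirical (uniform) distribution of a sample of `T` points. -/
def empMeasure {T : ℕ} (s : Fin T → ℝ × ℝ) : Measure (ℝ × ℝ) :=
  (T : ℝ≥0∞)⁻¹ • ∑ t : Fin T, Measure.dirac (s t)

/-! The expected ATB of the empirical distribution is computed exactly. For a fixed threshold `q`,
the bias of a bin of `J_S` is the empirical mean of `T` i.i.d. copies of `(v - y) 1{v ∈ bin}`,
which has mean zero by calibration; so its expected square is `1/T` times the second moment, and
the two bins together contribute `E (v - y)² / T`. For `y ∈ {0,1}` one has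
`(v - y)² = v (1 - v) + (v - y)(2v - 1)`, and calibration kills the second term, so
`E (v - y)² = E v (1 - v) ≤ 1/4`. Markov's inequality then gives `Pr[ATB(J_S) > 1/T] ≤ 1/4`. -/

theorem integral_sq_sum_pi_of_integral_eq_zero {ι α : Type*} [Fintype ι] [MeasurableSpace α]
    {μ : Measure α} [IsProbabilityMeasure μ] {g : α → ℝ} (hg : MemLp g 2 μ)
    (h0 : ∫ a, g a ∂μ = 0) :
    ∫ x, (∑ i, g (x i)) ^ 2 ∂(Measure.pi fun _ : ι => μ) = Fintype.card ι * ∫ a, g a ^ 2 ∂μ := by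
  have hcoord : ∀ i, MemLp (fun x : ι → α => g (x i)) 2 (Measure.pi fun _ => μ) := fun i =>
    hg.comp_measurePreserving (measurePreserving_eval _ i)
  have hmean : ∫ x, ∑ i, g (x i) ∂(Measure.pi fun _ : ι => μ) = 0 := by
    rw [integral_finsetSum _ fun i _ => (hcoord i).integrable one_le_two]
    exact Finset.sum_eq_zero fun i _ => by rw [integral_comp_eval hg.aestronglyMeasurable, h0]
  have hvar := ProbabilityTheory.variance_sum_pi (μ := fun _ : ι => μ) (X := fun _ => g)
    fun _ => hg
  rw [Finset.sum_fn, ProbabilityTheory.variance_of_integral_eq_zero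
      (memLp_finsetSum _ fun i _ => hcoord i).aemeasurable hmean,
    ProbabilityTheory.variance_of_integral_eq_zero hg.aemeasurable h0, Finset.sum_const,
    Finset.card_univ, nsmul_eq_mul] at hvar
  simpa using hvar

theorem Continuous.memLp_top_of_ae_mem_compact {α : Type*} [TopologicalSpace α]
    [MeasurableSpace α] [OpensMeasurableSpace α] {μ : Measure α} {K : Set α} (hK : IsCompact K)
    (hμK : ∀ᵐ a ∂μ, a ∈ K) {f : α → ℝ} (hf : Continuous f) : MemLp f ⊤ μ := by
  obtain ⟨C, hC⟩ := hK.exists_bound_of_continuousOn hf.continuousOn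
  exact memLp_top_of_bound hf.aestronglyMeasurable C (hμK.mono hC)

theorem three_quarters_le_measure_le_of_integral_le {Ω : Type*} [MeasurableSpace Ω]
    {P : Measure Ω} [IsProbabilityMeasure P] {f : Ω → ℝ} (hf0 : 0 ≤ᵐ[P] f) (hf : Integrable f P)
    {ε : ℝ} (hε : 0 < ε) (h : ∫ ω, f ω ∂P ≤ ε / 4) : 3 / 4 ≤ P {ω | f ω ≤ ε} := by
  set A := {ω | f ω ≤ ε}
  have hAc : P.real Aᶜ ≤ 1 / 4 := by
    have hmarkov := mul_meas_ge_le_integral_of_nonneg hf0 hf ε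
    have hsub : P.real Aᶜ ≤ P.real {ω | ε ≤ f ω} :=
      measureReal_mono fun ω (hω : ¬ f ω ≤ ε) => (not_le.1 hω).le
    nlinarith
  have hA : 3 / 4 ≤ P.real A := by
    have hunion := measureReal_union_le (μ := P) A Aᶜ
    rw [Set.union_compl_self, probReal_univ] at hunion
    linarith
  have h34 : ENNReal.ofReal (3 / 4) = 3 / 4 := by
    rw [ENNReal.ofReal_div_of_pos] <;> norm_num
  rw [← h34]
  exact (ENNReal.ofReal_le_iff_le_toReal (measure_ne_top P A)).2 hA

section EmpiricalMeasure

variable {T : ℕ}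

theorem integral_empMeasure (s : Fin T → ℝ × ℝ) (f : ℝ × ℝ → ℝ) :
    ∫ a, f a ∂(empMeasure s) = (T : ℝ)⁻¹ * ∑ t, f (s t) := by
  rw [empMeasure, integral_smul_measure,
    integral_finsetSum_measure fun t _ => integrable_dirac enorm_lt_top]
  simp [integral_dirac]

theorem abs_integral_empMeasure_le {s : Fin T → ℝ × ℝ} {f : ℝ × ℝ → ℝ}
    (hf : ∀ t, |f (s t)| ≤ 1) : |∫ a, f a ∂(empMeasure s)| ≤ 1 := by
  rw [integral_empMeasure, abs_mul, abs_inv, Nat.abs_cast]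
  calc (T : ℝ)⁻¹ * |∑ t, f (s t)| ≤ (T : ℝ)⁻¹ * T := by
        gcongr
        exact (Finset.abs_sum_le_sum_abs _ _).trans
          ((Finset.sum_le_sum fun t _ => hf t).trans (by simp))
    _ ≤ 1 := inv_mul_le_one_of_le₀ le_rfl (Nat.cast_nonneg T)

theorem measurable_integral_empMeasure {f : ℝ → ℝ × ℝ → ℝ}
    (hf : Measurable (Function.uncurry f)) :
    Measurable fun z : (Fin T → ℝ × ℝ) × ℝ => ∫ a, f z.2 a ∂(empMeasure z.1) := by
  simp_rw [integral_empMeasure]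
  exact measurable_const.mul <| Finset.measurable_sum _ fun t _ =>
    hf.comp (measurable_snd.prodMk ((measurable_pi_apply t).comp measurable_fst))

variable {μ : Measure (ℝ × ℝ)} [IsProbabilityMeasure μ] {g : ℝ × ℝ → ℝ}

theorem integrable_sq_integral_empMeasure (hg : MemLp g 2 μ) :
    Integrable (fun x => (∫ a, g a ∂(empMeasure x)) ^ 2) (Measure.pi fun _ : Fin T => μ) := by
  simp_rw [integral_empMeasure, mul_pow]
  exact (memLp_finsetSum _ fun t _ =>
    hg.comp_measurePreserving (measurePreserving_eval _ t)).integrable_sq.const_mul _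

theorem integral_sq_integral_empMeasure (hg : MemLp g 2 μ) (h0 : ∫ a, g a ∂μ = 0) :
    ∫ x, (∫ a, g a ∂(empMeasure x)) ^ 2 ∂(Measure.pi fun _ : Fin T => μ)
      = (T : ℝ)⁻¹ * ∫ a, g a ^ 2 ∂μ := by
  simp_rw [integral_empMeasure, mul_pow]
  rw [integral_const_mul, integral_sq_sum_pi_of_integral_eq_zero hg h0, Fintype.card_fin]
  rcases T.eq_zero_or_pos with rfl | hT
  · simp
  · field_simp

end EmpiricalMeasure

section Bins

def binNegTerm (q : ℝ) (a : ℝ × ℝ) : ℝ := (a.1 - a.2) * if a.1 < q then 1 else 0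

def binPosTerm (q : ℝ) (a : ℝ × ℝ) : ℝ := (a.1 - a.2) * if q ≤ a.1 then 1 else 0

variable {μ : Measure (ℝ × ℝ)}

theorem binNeg_eq_integral (q : ℝ) : binNeg μ q = ∫ a, binNegTerm q a ∂μ := rfl

theorem binPos_eq_integral (q : ℝ) : binPos μ q = ∫ a, binPosTerm q a ∂μ := rfl

theorem ATB_nonneg : 0 ≤ ATB μ :=
  intervalIntegral.integral_nonneg zero_le_one fun _ _ => by positivity

theorem measurable_binNegTerm : Measurable (Function.uncurry binNegTerm) :=
  (measurable_snd.fst.sub measurable_snd.snd).mul <|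
    Measurable.ite (measurableSet_lt measurable_snd.fst measurable_fst) measurable_const
      measurable_const

theorem measurable_binPosTerm : Measurable (Function.uncurry binPosTerm) :=
  (measurable_snd.fst.sub measurable_snd.snd).mul <|
    Measurable.ite (measurableSet_le measurable_fst measurable_snd.fst) measurable_const
      measurable_const

theorem abs_binNegTerm_le (q : ℝ) (a : ℝ × ℝ) : |binNegTerm q a| ≤ |a.1 - a.2| := by
  unfold binNegTerm; split_ifs <;> simp

theorem abs_binPosTerm_le (q : ℝ) (a : ℝ × ℝ) : |binPosTerm q a| ≤ |a.1 - a.2| := by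
  unfold binPosTerm; split_ifs <;> simp

theorem binNegTerm_sq_add_binPosTerm_sq (q : ℝ) (a : ℝ × ℝ) :
    binNegTerm q a ^ 2 + binPosTerm q a ^ 2 = (a.1 - a.2) ^ 2 := by
  unfold binNegTerm binPosTerm
  rcases lt_or_ge a.1 q with h | h
  · simp [h, not_le.mpr h]
  · simp [h, not_lt.mpr h]

theorem memLp_binNegTerm {p : ℝ≥0∞} (h : MemLp (fun a : ℝ × ℝ => a.1 - a.2) p μ) (q : ℝ) :
    MemLp (binNegTerm q) p μ :=
  h.mono (measurable_binNegTerm.comp measurable_prodMk_left).aestronglyMeasurable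
    (ae_of_all _ fun a => abs_binNegTerm_le q a)

theorem memLp_binPosTerm {p : ℝ≥0∞} (h : MemLp (fun a : ℝ × ℝ => a.1 - a.2) p μ) (q : ℝ) :
    MemLp (binPosTerm q) p μ :=
  h.mono (measurable_binPosTerm.comp measurable_prodMk_left).aestronglyMeasurable
    (ae_of_all _ fun a => abs_binPosTerm_le q a)

end Bins

section Support

variable {μ : Measure (ℝ × ℝ)}

theorem ae_mem_Icc_prod_Icc (hsupp : ∀ᵐ a ∂μ, a.1 ∈ Set.Icc (0:ℝ) 1 ∧ (a.2 = 0 ∨ a.2 = 1)) :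
    ∀ᵐ a ∂μ, a ∈ Set.Icc (0:ℝ) 1 ×ˢ Set.Icc (0:ℝ) 1 := by
  filter_upwards [hsupp] with a ⟨hv, hy⟩
  exact ⟨hv, by rcases hy with hy | hy <;> simp [hy]⟩

theorem Continuous.memLp_top_of_supp
    (hsupp : ∀ᵐ a ∂μ, a.1 ∈ Set.Icc (0:ℝ) 1 ∧ (a.2 = 0 ∨ a.2 = 1)) {f : ℝ × ℝ → ℝ}
    (hf : Continuous f) : MemLp f ⊤ μ :=
  hf.memLp_top_of_ae_mem_compact (isCompact_Icc.prod isCompact_Icc) (ae_mem_Icc_prod_Icc hsupp)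

theorem ae_abs_sub_le_one_s14 (hsupp : ∀ᵐ a ∂μ, a.1 ∈ Set.Icc (0:ℝ) 1 ∧ (a.2 = 0 ∨ a.2 = 1)) :
    ∀ᵐ a ∂μ, |a.1 - a.2| ≤ 1 := by
  filter_upwards [ae_mem_Icc_prod_Icc hsupp] with a ⟨⟨hv0, hv1⟩, hy0, hy1⟩
  exact abs_sub_le_of_nonneg_of_le hv0 hv1 hy0 hy1

end Support

namespace Calibrated

variable {μ : Measure (ℝ × ℝ)}

theorem condExp_fst_sub_snd [IsFiniteMeasure μ] (hcal : Calibrated μ)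
    (hv : Integrable Prod.fst μ) (hy : Integrable Prod.snd μ) :
    μ[Prod.fst - Prod.snd | MeasurableSpace.comap Prod.fst inferInstance] =ᵐ[μ] 0 := by
  refine (ae_eq_condExp_of_forall_setIntegral_eq measurable_fst.comap_le (hv.sub hy)
    (fun _ _ _ => integrableOn_zero) ?_ aestronglyMeasurable_zero).symm
  rintro _ ⟨s, hs, rfl⟩ -
  rw [Pi.sub_def, integral_sub hv.integrableOn hy.integrableOn, hcal s hs, sub_self]
  exact integral_zero _ _

theorem integral_sub_mul_comp_fst [IsFiniteMeasure μ] (hcal : Calibrated μ)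
    (hv : Integrable Prod.fst μ) (hy : Integrable Prod.snd μ) {g : ℝ → ℝ} (hg : Measurable g)
    (hgv : Integrable (fun a : ℝ × ℝ => (a.1 - a.2) * g a.1) μ) :
    ∫ a, (a.1 - a.2) * g a.1 ∂μ = 0 := by
  have hgm : StronglyMeasurable[MeasurableSpace.comap Prod.fst inferInstance]
      (fun a : ℝ × ℝ => g a.1) :=
    (hg.comp (comap_measurable Prod.fst)).stronglyMeasurable
  rw [← integral_condExp (measurable_fst (α := ℝ) (β := ℝ)).comap_le]
  refine integral_eq_zero_of_ae ?_
  filter_upwards [condExp_mul_of_stronglyMeasurable_right (f := Prod.fst - Prod.snd) hgm hgv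
    (hv.sub hy), condExp_fst_sub_snd hcal hv hy] with a hpull hzero
  exact hpull.trans (by rw [Pi.mul_apply, hzero, Pi.zero_apply, zero_mul])

theorem binNeg_eq_zero [IsFiniteMeasure μ] (hcal : Calibrated μ) (hv : Integrable Prod.fst μ)
    (hy : Integrable Prod.snd μ) (q : ℝ) : binNeg μ q = 0 :=
  integral_sub_mul_comp_fst hcal hv hy
    (Measurable.ite measurableSet_Iio measurable_const measurable_const)
    (memLp_one_iff_integrable.1 (memLp_binNegTerm (memLp_one_iff_integrable.2 (hv.sub hy)) q))

theorem binPos_eq_zero [IsFiniteMeasure μ] (hcal : Calibrated μ) (hv : Integrable Prod.fst μ)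
    (hy : Integrable Prod.snd μ) (q : ℝ) : binPos μ q = 0 :=
  integral_sub_mul_comp_fst hcal hv hy
    (Measurable.ite measurableSet_Ici measurable_const measurable_const)
    (memLp_one_iff_integrable.1 (memLp_binPosTerm (memLp_one_iff_integrable.2 (hv.sub hy)) q))

theorem integral_sq_sub_le [IsProbabilityMeasure μ] (hcal : Calibrated μ)
    (hsupp : ∀ᵐ a ∂μ, a.1 ∈ Set.Icc (0:ℝ) 1 ∧ (a.2 = 0 ∨ a.2 = 1)) :
    ∫ a, (a.1 - a.2) ^ 2 ∂μ ≤ 1 / 4 := by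
  have hint : ∀ {f : ℝ × ℝ → ℝ}, Continuous f → Integrable f μ := fun hf =>
    (hf.memLp_top_of_supp hsupp).integrable le_top
  have hsplit : ∀ᵐ a ∂μ, (a.1 - a.2) ^ 2 = a.1 * (1 - a.1) + (a.1 - a.2) * (2 * a.1 - 1) := by
    filter_upwards [hsupp] with a ⟨_, hy⟩
    rcases hy with hy | hy <;> rw [hy] <;> ring
  rw [integral_congr_ae hsplit, integral_add (hint (by fun_prop)) (hint (by fun_prop)),
    integral_sub_mul_comp_fst hcal (hint continuous_fst) (hint continuous_snd)
      (g := fun v => 2 * v - 1) (by fun_prop) (hint (by fun_prop)), add_zero]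
  calc ∫ a, a.1 * (1 - a.1) ∂μ ≤ ∫ _, (1 / 4 : ℝ) ∂μ :=
        integral_mono (hint (by fun_prop)) (integrable_const _)
          fun a => by nlinarith [sq_nonneg (a.1 - 1 / 2)]
    _ = 1 / 4 := by simp

end Calibrated

section Expectation

variable {μ : Measure (ℝ × ℝ)} [IsProbabilityMeasure μ] {T : ℕ}

theorem integrable_binNeg_sq_add_binPos_sq_empMeasure (hμ : ∀ᵐ a ∂μ, |a.1 - a.2| ≤ 1)
    (ν : Measure ℝ) [IsFiniteMeasure ν] :
    Integrable (fun z : (Fin T → ℝ × ℝ) × ℝ =>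
      binNeg (empMeasure z.1) z.2 ^ 2 + binPos (empMeasure z.1) z.2 ^ 2)
      ((Measure.pi fun _ => μ).prod ν) := by
  have hcoord : ∀ᵐ x ∂(Measure.pi fun _ : Fin T => μ), ∀ t, |(x t).1 - (x t).2| ≤ 1 :=
    ae_all_iff.2 fun t => (Measure.tendsto_eval_ae_ae (μ := fun _ => μ) (i := t)).eventually hμ
  refine Integrable.of_bound
    (((measurable_integral_empMeasure measurable_binNegTerm).pow_const 2).add
      ((measurable_integral_empMeasure measurable_binPosTerm).pow_const 2)).aestronglyMeasurable
    2 ?_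
  filter_upwards [Measure.quasiMeasurePreserving_fst.ae hcoord] with z hz
  have hneg := (sq_le_one_iff_abs_le_one _).2 <|
    abs_integral_empMeasure_le fun t => (abs_binNegTerm_le z.2 (z.1 t)).trans (hz t)
  have hpos := (sq_le_one_iff_abs_le_one _).2 <|
    abs_integral_empMeasure_le fun t => (abs_binPosTerm_le z.2 (z.1 t)).trans (hz t)
  rw [Real.norm_eq_abs, abs_of_nonneg (by positivity)]
  exact (add_le_add hneg hpos).trans_eq one_add_one_eq_two

theorem integrable_ATB_empMeasure (hμ : ∀ᵐ a ∂μ, |a.1 - a.2| ≤ 1) :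
    Integrable (fun x => ATB (empMeasure x)) (Measure.pi fun _ : Fin T => μ) := by
  simp_rw [ATB, intervalIntegral.integral_of_le zero_le_one]
  exact (integrable_binNeg_sq_add_binPos_sq_empMeasure hμ _).integral_prod_left

theorem integral_ATB_empMeasure (hcal : Calibrated μ)
    (hsupp : ∀ᵐ a ∂μ, a.1 ∈ Set.Icc (0:ℝ) 1 ∧ (a.2 = 0 ∨ a.2 = 1)) :
    ∫ x, ATB (empMeasure x) ∂(Measure.pi fun _ : Fin T => μ)
      = (T : ℝ)⁻¹ * ∫ a, (a.1 - a.2) ^ 2 ∂μ := by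
  set ν := (volume : Measure ℝ).restrict (Set.Ioc 0 1)
  have : IsProbabilityMeasure ν := ⟨by simp [ν]⟩
  have hv := (continuous_fst.memLp_top_of_supp hsupp).integrable le_top
  have hy := (continuous_snd.memLp_top_of_supp hsupp).integrable le_top
  have hvy : MemLp (fun a : ℝ × ℝ => a.1 - a.2) 2 μ :=
    ((by fun_prop : Continuous fun a : ℝ × ℝ => a.1 - a.2).memLp_top_of_supp hsupp).mono_exponent
      le_top
  have hbins : ∀ q, ∫ x, binNeg (empMeasure x) q ^ 2 + binPos (empMeasure x) q ^ 2
      ∂(Measure.pi fun _ : Fin T => μ) = (T : ℝ)⁻¹ * ∫ a, (a.1 - a.2) ^ 2 ∂μ := by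
    intro q
    have hneg := memLp_binNegTerm hvy q
    have hpos := memLp_binPosTerm hvy q
    simp_rw [binNeg_eq_integral, binPos_eq_integral]
    rw [integral_add (integrable_sq_integral_empMeasure hneg)
        (integrable_sq_integral_empMeasure hpos),
      integral_sq_integral_empMeasure hneg (Calibrated.binNeg_eq_zero hcal hv hy q),
      integral_sq_integral_empMeasure hpos (Calibrated.binPos_eq_zero hcal hv hy q), ← mul_add,
      ← integral_add hneg.integrable_sq hpos.integrable_sq]
    simp_rw [binNegTerm_sq_add_binPosTerm_sq]
  calc ∫ x, ATB (empMeasure x) ∂(Measure.pi fun _ : Fin T => μ)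
      = ∫ x, ∫ q, binNeg (empMeasure x) q ^ 2 + binPos (empMeasure x) q ^ 2 ∂ν
          ∂(Measure.pi fun _ : Fin T => μ) := by
        simp_rw [ATB, intervalIntegral.integral_of_le zero_le_one]
        rfl
    _ = ∫ q, ∫ x, binNeg (empMeasure x) q ^ 2 + binPos (empMeasure x) q ^ 2
          ∂(Measure.pi fun _ : Fin T => μ) ∂ν :=
        integral_integral_swap
          (integrable_binNeg_sq_add_binPos_sq_empMeasure (ae_abs_sub_le_one_s14 hsupp) ν)
    _ = (T : ℝ)⁻¹ * ∫ a, (a.1 - a.2) ^ 2 ∂μ := by simp_rw [hbins]; simp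

end Expectation

/-- On a sample of `T` i.i.d. points from a calibrated distribution, the empirical ATB is at
most `1/T` with probability at least `3/4`. -/
theorem atb_calibrated_acceptance (mu : Measure (ℝ × ℝ)) [IsProbabilityMeasure mu]
    (hsupp : ∀ᵐ x ∂mu, x.1 ∈ Set.Icc (0:ℝ) 1 ∧ (x.2 = 0 ∨ x.2 = 1))
    (hcal : Calibrated mu) (T : ℕ) (hT : 0 < T) :
    Measure.pi (fun _ : Fin T => mu) {s | ATB (empMeasure s) ≤ 1 / (T:ℝ)} ≥ 3 / 4 := by
  refine three_quarters_le_measure_le_of_integral_le (ae_of_all _ fun _ => ATB_nonneg)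
    (integrable_ATB_empMeasure (ae_abs_sub_le_one_s14 hsupp)) (by positivity) ?_
  rw [integral_ATB_empMeasure hcal hsupp]
  calc (T : ℝ)⁻¹ * ∫ a, (a.1 - a.2) ^ 2 ∂mu ≤ (T : ℝ)⁻¹ * (1 / 4) := by
        gcongr
        exact Calibrated.integral_sq_sub_le hcal hsupp
    _ = 1 / T / 4 := by ring

end
end

section
/- For every positive integer T, every r = (r_1,…,r_T) ∈ [0,1]^T, and every y ∈ {0,1}^T, the smooth calibration error of the constant prediction sequence r̄ = (r̄,…,r̄) ∈ [0,1]^T with r̄ := (1/T) Σ_{t=1}^T r_t is no larger than that of r: smCal(r̄, y) ≤ smCal(r, y). -/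
open MeasureTheory Finset

noncomputable section

/-! A weight evaluated along the pooled sequence is a single constant `c = w r̄`, and the
constant weight `c` is admissible for `r` as well. It gives `r` the same value, because
pooling preserves the total residual: `∑ (r̄ - y t) = ∑ (r t - y t)`. -/

section

variable {T : ℕ}

theorem mean_mem_Icc {r : Fin T → ℝ} (hr : ∀ t, r t ∈ Set.Icc (0:ℝ) 1) :
    (1 / (T:ℝ)) * ∑ t, r t ∈ Set.Icc (0:ℝ) 1 := by
  have hsum : ∑ t, r t ≤ T := by
    simpa using sum_le_sum fun t (_ : t ∈ univ) => (hr t).2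
  rw [one_div_mul_eq_div]
  exact ⟨div_nonneg (sum_nonneg fun t _ => (hr t).1) T.cast_nonneg,
    div_le_one_of_le₀ hsum T.cast_nonneg⟩

theorem sum_const_mean (r : Fin T → ℝ) :
    ∑ _t : Fin T, (1 / (T:ℝ)) * ∑ t, r t = ∑ t, r t := by
  rcases T.eq_zero_or_pos with rfl | hT
  · simp
  · simp only [sum_const, card_univ, Fintype.card_fin, nsmul_eq_mul]
    field_simp

theorem sum_pooled_sub_mul (r y : Fin T → ℝ) (c : ℝ) :
    ∑ t, ((1 / (T:ℝ)) * ∑ s, r s - y t) * c = ∑ t, (r t - y t) * c := by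
  rw [← sum_mul, ← sum_mul, sum_sub_distrib, sum_sub_distrib, sum_const_mean]

theorem smCalSeq_le {r y : Fin T → ℝ} {c : ℝ}
    (h : ∀ w : ℝ → ℝ, LipschitzOnWith 1 w (Set.Icc 0 1) →
      (∀ x ∈ Set.Icc (0:ℝ) 1, w x ∈ Set.Icc (-1:ℝ) 1) →
      (1 / (T:ℝ)) * ∑ t, (r t - y t) * w (r t) ≤ c) :
    smCalSeq r y ≤ c := by
  refine csSup_le ⟨_, 0, LipschitzWith.const' 0 |>.lipschitzOnWith,
    fun _ _ => ⟨by norm_num, by norm_num⟩, rfl⟩ ?_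
  rintro _ ⟨w, hlip, hw, rfl⟩
  exact h w hlip hw

theorem le_smCalSeq {r : Fin T → ℝ} (y : Fin T → ℝ) (hr : ∀ t, r t ∈ Set.Icc (0:ℝ) 1)
    {w : ℝ → ℝ} (hlip : LipschitzOnWith 1 w (Set.Icc 0 1))
    (hw : ∀ x ∈ Set.Icc (0:ℝ) 1, w x ∈ Set.Icc (-1:ℝ) 1) :
    (1 / (T:ℝ)) * ∑ t, (r t - y t) * w (r t) ≤ smCalSeq r y := by
  refine le_csSup ⟨(1 / (T:ℝ)) * ∑ t, |r t - y t|, ?_⟩ ⟨w, hlip, hw, rfl⟩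
  rintro _ ⟨v, -, hv, rfl⟩
  gcongr with t
  have hvt : |v (r t)| ≤ 1 := abs_le.mpr (hv _ (hr t))
  calc (r t - y t) * v (r t) ≤ |(r t - y t) * v (r t)| := le_abs_self _
    _ = |r t - y t| * |v (r t)| := abs_mul _ _
    _ ≤ |r t - y t| := mul_le_of_le_one_right (abs_nonneg _) hvt

end

theorem smCal_avg_le_general (T : ℕ) (r y : Fin T → ℝ)
    (hr : ∀ t, r t ∈ Set.Icc (0:ℝ) 1) :
    smCalSeq (fun _ => (1 / (T:ℝ)) * ∑ t, r t) y ≤ smCalSeq r y := by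
  refine smCalSeq_le fun w _ hw => ?_
  rw [sum_pooled_sub_mul]
  exact le_smCalSeq y hr (LipschitzWith.const' _).lipschitzOnWith
    fun _ _ => hw _ (mean_mem_Icc hr)

/-- Pooling all predictions into their average never increases the smooth calibration
error, regardless of the realized states. -/
theorem smCal_avg_le (T : ℕ) (hT : 0 < T) (r y : Fin T → ℝ)
    (hr : ∀ t, r t ∈ Set.Icc (0:ℝ) 1) (hy : ∀ t, y t = 0 ∨ y t = 1) :
    smCalSeq (fun _ => (1 / (T:ℝ)) * ∑ t, r t) y ≤ smCalSeq r y :=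
  smCal_avg_le_general T r y hr

end
end
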